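/- arXiv:1202.3621 — 2 statements merged into one kernel-verified Lean document; each statement's English description precedes it below -/
import Mathlib

section
/- Let N be a network, I an influence specification for N, and fix a kinetic order v with I(v) = I. Then N is injective over K_g(N,I) if and only if both of the following hold: (i) N is injective over K_g(N)[v]; and (ii) for all sets C ⊆ {1,…,m} and J ⊆ {1,…,n} of cardinality s such that det(A_{J,C}) ≠ 0, the sign of det(Z(w)_{C,J}) is the same for all kinetic orders w ∈ Σ(I). -/
noncomputable section

namespace CRN

variable {n m : ℕ}

/-- The orthogonal complement of a subspace of `Fin n → ℝ` with respect to the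
standard scalar product. -/
def orthComp (F : Submodule ℝ (Fin n → ℝ)) : Submodule ℝ (Fin n → ℝ) where
  carrier := {w | ∀ v ∈ F, ∑ i, w i * v i = 0}
  add_mem' := by
    intro a b ha hb v hv
    have h1 := ha v hv
    have h2 := hb v hv
    have key : ∀ i, (a + b) i * v i = a i * v i + b i * v i := fun i => by
      simp [add_mul]
    calc ∑ i, (a + b) i * v i
        = ∑ i, (a i * v i + b i * v i) := Finset.sum_congr rfl (fun i _ => key i)
      _ = (∑ i, a i * v i) + ∑ i, b i * v i := Finset.sum_add_distrib
      _ = 0 := by rw [h1, h2, add_zero]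
  zero_mem' := by
    intro v hv
    simp
  smul_mem' := by
    intro t a ha v hv
    have h1 := ha v hv
    simp only [Set.mem_setOf_eq, Pi.smul_apply, smul_eq_mul]
    calc ∑ i, t * a i * v i
        = t * ∑ i, a i * v i := by
          rw [Finset.mul_sum]
          exact Finset.sum_congr rfl fun i _ => (mul_assoc _ _ _)
      _ = 0 := by rw [h1, mul_zero]

/-- `ω` is a reduced basis of `F^⊥`: it is a basis of the orthogonal complement of `F`,
`ω i` has `i`-th coordinate `1`, and `j`-th coordinate `0` for every `j < d`, `j ≠ i`. -/
def IsReducedBasis (d : ℕ) (F : Submodule ℝ (Fin n → ℝ)) (ω : Fin d → Fin n → ℝ) : Prop :=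
  (∀ i, ω i ∈ orthComp F) ∧
  Submodule.span ℝ (Set.range ω) = orthComp F ∧
  LinearIndependent ℝ ω ∧
  (∀ (i : Fin d) (j : Fin n), (j : ℕ) = (i : ℕ) → ω i j = 1) ∧
  (∀ (i : Fin d) (j : Fin n), (j : ℕ) < d → (j : ℕ) ≠ (i : ℕ) → ω i j = 0)

/-- The matrix whose top `d` rows are `ω` and whose remaining rows agree with `M`. -/
def tildeMat (d : ℕ) (ω : Fin d → Fin n → ℝ) (M : Matrix (Fin n) (Fin n) ℝ) :
    Matrix (Fin n) (Fin n) ℝ :=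
  Matrix.of fun i j => if h : (i : ℕ) < d then ω ⟨(i : ℕ), h⟩ j else M i j

/-- The stoichiometric matrix: `r`-th column is `y' r - y r`. -/
def stoich (y y' : Fin m → Fin n → ℝ) : Matrix (Fin n) (Fin m) ℝ :=
  Matrix.of fun i r => y' r i - y r i

/-- The stoichiometric subspace: the span of the reaction vectors `y' r - y r`. -/
def stoichSpan (y y' : Fin m → Fin n → ℝ) : Submodule ℝ (Fin n → ℝ) :=
  Submodule.span ℝ (Set.range fun r => (fun i => y' r i - y r i))

/-- The matrix whose `r`-th row is the kinetic-order vector `v r`. -/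
def Zmat (v : Fin m → Fin n → ℝ) : Matrix (Fin m) (Fin n) ℝ :=
  Matrix.of fun r i => v r i

/-- The Jacobian matrix of `f` at `c`. -/
def jac (f : (Fin n → ℝ) → Fin n → ℝ) (c : Fin n → ℝ) : Matrix (Fin n) (Fin n) ℝ :=
  Matrix.of fun i j => fderiv ℝ (fun x => f x i) c (Pi.single j 1)

/-- The species formation rate function of a kinetics `K`. -/
def specForm (y y' : Fin m → Fin n → ℝ) (K : Fin m → (Fin n → ℝ) → ℝ) (c : Fin n → ℝ) :
    Fin n → ℝ :=
  fun i => ∑ r, K r c * (y' r i - y r i)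

/-- The power-law rate functions with rate vector `κ` and kinetic order `v`. -/
def powerLaw (κ : Fin m → ℝ) (v : Fin m → Fin n → ℝ) : Fin m → (Fin n → ℝ) → ℝ :=
  fun r c => κ r * ∏ j, c j ^ v r j

/-- The power-law species formation rate function. -/
def plf (y y' : Fin m → Fin n → ℝ) (κ : Fin m → ℝ) (v : Fin m → Fin n → ℝ) (c : Fin n → ℝ) :
    Fin n → ℝ :=
  fun i => ∑ r, κ r * (∏ j, c j ^ v r j) * (y' r i - y r i)

/-- The extended rate function associated with a reduced basis `ω` and `f`. -/
def tildeF (d : ℕ) (ω : Fin d → Fin n → ℝ) (f : (Fin n → ℝ) → Fin n → ℝ) (c : Fin n → ℝ) :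
    Fin n → ℝ :=
  fun i => if h : (i : ℕ) < d then ∑ j, ω ⟨(i : ℕ), h⟩ j * c j else f c i

/-- The extended rate function with the bottom `s` components negated. -/
def hatF (d : ℕ) (ω : Fin d → Fin n → ℝ) (f : (Fin n → ℝ) → Fin n → ℝ) (c : Fin n → ℝ) :
    Fin n → ℝ :=
  fun i => if h : (i : ℕ) < d then ∑ j, ω ⟨(i : ℕ), h⟩ j * c j else -(f c i)

/-- Membership in the positive orthant. -/
def Pos (c : Fin n → ℝ) : Prop := ∀ i, 0 < c i

/-- The network is injective over the power-law kinetics with fixed kinetic order `v`. -/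
def InjOverPL (y y' : Fin m → Fin n → ℝ) (v : Fin m → Fin n → ℝ) : Prop :=
  ∀ κ : Fin m → ℝ, (∀ r, 0 < κ r) → ∀ a b : Fin n → ℝ, Pos a → Pos b → a ≠ b →
    a - b ∈ stoichSpan y y' → plf y y' κ v a ≠ plf y y' κ v b

/-- An influence specification takes values in `{-1, 0, 1}`. -/
def IsInfluence (I : Fin m → Fin n → ℝ) : Prop := ∀ r i, I r i = -1 ∨ I r i = 0 ∨ I r i = 1

/-- The influence specification associated with a kinetic order `v`. -/
def infOf (v : Fin m → Fin n → ℝ) : Fin m → Fin n → ℝ := fun r i => Real.sign (v r i)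

/-- `v ∈ Σ(I)`: the kinetic order `v` has associated influence specification `I`. -/
def InSigma (I : Fin m → Fin n → ℝ) (v : Fin m → Fin n → ℝ) : Prop :=
  ∀ r i, Real.sign (v r i) = I r i

/-- The partial order `I' ≼ I` on influence specifications. -/
def Preceq (I' I : Fin m → Fin n → ℝ) : Prop :=
  ∀ r i, (I' r i = 1 → I r i = 1) ∧ (I' r i = -1 → I r i = -1)

/-- The matrix `M̃(v)`: top `d` rows `ω`, bottom rows from `A ⬝ Z(v)`. -/
def Mt (y y' : Fin m → Fin n → ℝ) (d : ℕ) (ω : Fin d → Fin n → ℝ)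
    (v : Fin m → Fin n → ℝ) : Matrix (Fin n) (Fin n) ℝ :=
  tildeMat d ω (stoich y y' * Zmat v)

/-- The influence specification `I` has a signed determinant. -/
def SignedDet (y y' : Fin m → Fin n → ℝ) (d : ℕ) (ω : Fin d → Fin n → ℝ)
    (I : Fin m → Fin n → ℝ) : Prop :=
  ∀ v w, InSigma I v → InSigma I w →
    Real.sign (Mt y y' d ω v).det = Real.sign (Mt y y' d ω w).det

/-- The influence specification `I` is sign-nonsingular (SNS). -/
def IsSNS (y y' : Fin m → Fin n → ℝ) (d : ℕ) (ω : Fin d → Fin n → ℝ)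
    (I : Fin m → Fin n → ℝ) : Prop :=
  SignedDet y y' d ω I ∧ ∀ v, InSigma I v → (Mt y y' d ω v).det ≠ 0

/-- `Ω` is an admissible kinetics domain: `ℝ^n_{>0} ⊆ Ω ⊆ ℝ^n_{≥0}`. -/
def KinDom (Ω : Set (Fin n → ℝ)) : Prop :=
  {c : Fin n → ℝ | ∀ i, 0 < c i} ⊆ Ω ∧ Ω ⊆ {c : Fin n → ℝ | ∀ i, 0 ≤ c i}

/-- The rate functions are nonnegative on the domain. -/
def KinNonneg (Ω : Set (Fin n → ℝ)) (K : Fin m → (Fin n → ℝ) → ℝ) : Prop :=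
  ∀ r, ∀ c ∈ Ω, 0 ≤ K r c

/-- `I_r^+ ⊆ supp c`. -/
def PosSupp (I : Fin m → Fin n → ℝ) (r : Fin m) (c : Fin n → ℝ) : Prop :=
  ∀ i, I r i = 1 → c i ≠ 0

/-- The kinetics `K` respects the influence specification `I`. -/
def Respects (Ω : Set (Fin n → ℝ)) (K : Fin m → (Fin n → ℝ) → ℝ)
    (I : Fin m → Fin n → ℝ) : Prop :=
  ∀ c ∈ Ω, ∀ r, (0 < K r c ↔ PosSupp I r c)

/-- The kinetics `K` is strictly monotonic with respect to `I`. -/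
def StrictlyMonotonic (Ω : Set (Fin n → ℝ)) (K : Fin m → (Fin n → ℝ) → ℝ)
    (I : Fin m → Fin n → ℝ) : Prop :=
  Respects Ω K I ∧
  ∀ (r : Fin m) (c d : Fin n → ℝ), c ∈ Ω → d ∈ Ω → PosSupp I r c → PosSupp I r d →
    ∀ i, (∀ j, j ≠ i → c j = d j) →
      ((I r i = 1 → c i < d i → K r c < K r d) ∧
       (I r i = -1 → c i < d i → K r d < K r c) ∧
       (I r i = 0 → K r c = K r d))

/-- The kinetics `K` is differentiable with respect to `I`. -/
def DiffWrt (Ω : Set (Fin n → ℝ)) (K : Fin m → (Fin n → ℝ) → ℝ)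
    (I : Fin m → Fin n → ℝ) : Prop :=
  Respects Ω K I ∧
  (∀ r, ∀ c ∈ Ω, ContinuousWithinAt (K r) Ω c) ∧
  (∀ (r : Fin m) (c : Fin n → ℝ), (∀ i, 0 < c i) → DifferentiableAt ℝ (K r) c) ∧
  (∀ (r : Fin m) (c : Fin n → ℝ), (∀ i, 0 < c i) → ∀ i,
     Real.sign (fderiv ℝ (K r) c (Pi.single i 1)) = I r i)

/-- `a` and `b` are non-overlapping with respect to `I`. -/
def NonOverlap (I : Fin m → Fin n → ℝ) (a b : Fin n → ℝ) : Prop :=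
  ∀ r, ¬ PosSupp I r a → PosSupp I r b

/-- The kinetics `K` is weakly monotonic with respect to `I`. -/
def WeaklyMonotonic (y : Fin m → Fin n → ℝ) (Ω : Set (Fin n → ℝ))
    (K : Fin m → (Fin n → ℝ) → ℝ) (I : Fin m → Fin n → ℝ) : Prop :=
  ∀ a ∈ Ω, ∀ b ∈ Ω, NonOverlap I a b → ∀ r,
    (K r b < K r a → ∃ i, Real.sign (a i - b i) = I r i ∧ I r i ≠ 0) ∧
    (K r a = K r b →
      ((∀ i, y r i ≠ 0 → a i = b i) ∨
        ∃ i j, i ≠ j ∧ Real.sign (a i - b i) = I r i ∧ I r i ≠ 0 ∧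
          Real.sign (a j - b j) = -(I r j) ∧ I r j ≠ 0))

/-- A square real matrix is a P-matrix: all principal minors are positive. -/
def IsPMatrix {N : ℕ} (M : Matrix (Fin N) (Fin N) ℝ) : Prop :=
  ∀ J : Finset (Fin N),
    0 < (M.submatrix (fun i : {x // x ∈ J} => (i : Fin N))
          (fun j : {x // x ∈ J} => (j : Fin N))).det

/-- The minor `det(A_{J,C})` of the stoichiometric matrix. -/
def subDetA (y y' : Fin m → Fin n → ℝ) (s : ℕ) (J : Finset (Fin n)) (C : Finset (Fin m))
    (hJ : J.card = s) (hC : C.card = s) : ℝ :=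
  ((stoich y y').submatrix (fun a => (J.orderIsoOfFin hJ a).1)
    (fun b => (C.orderIsoOfFin hC b).1)).det

/-- The minor `det(Z(v)_{C,J})`. -/
def subDetZ (v : Fin m → Fin n → ℝ) (s : ℕ) (C : Finset (Fin m)) (J : Finset (Fin n))
    (hC : C.card = s) (hJ : J.card = s) : ℝ :=
  ((Zmat v).submatrix (fun a => (C.orderIsoOfFin hC a).1)
    (fun b => (J.orderIsoOfFin hJ b).1)).det

/-- The Hill-type species formation rate function. -/
def hillf (y y' : Fin m → Fin n → ℝ) (κ : Fin m → ℝ) (δ v : Fin m → Fin n → ℝ)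
    (c : Fin n → ℝ) : Fin n → ℝ :=
  fun i => ∑ r, κ r * (∏ j, (c j ^ v r j) / (δ r j + c j ^ v r j)) * (y' r i - y r i)

end CRN

/-!
For `a, c > 0` the differences `a_j - c_j` and `log a_j - log c_j` have equal signs, and so do
`a^{w_r} - c^{w_r}` and `(Z(w) (log a - log c))_r`. Rescaling by positive factors therefore shows
that the network is injective over `K_g(N)[w]` iff, for all `ℓ, μ > 0`, the map
`A diag(ℓ) Z(w) diag(μ)` is injective on `Γ`, i.e. its restriction to `Γ` has nonzero determinant
`D_w(ℓ, μ)`. Writing `A = B Q` with `B` a basis matrix of `Γ`, so that `D_w = det (Q diag(ℓ) Z(w)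
diag(μ) B)`, Cauchy–Binet gives `D_w(ℓ, μ) = ∑_{C,J} ℓ^C μ^J det A_{J,C} det Z(w)_{C,J}`. Such a
polynomial has no zero in the open orthant iff its coefficients are weakly of one sign and not all
zero: a coefficient is the value at the indicators of `C` and `J`, on the boundary of the orthant.

As `Σ(I)` is convex and `D` is continuous, nonvanishing for every `w ∈ Σ(I)` gives one sign for
all these coefficients simultaneously. Moreover `det Z(w)_{C,J}` is affine in each entry of `w`,
and each entry ranges over a point or an open half-line, so if it vanishes at one `w ∈ Σ(I)`
without changing sign on `Σ(I)`, it vanishes on all of `Σ(I)`. Conversely, under (ii) every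
coefficient of `D_w` is a positive multiple of the corresponding one of `D_v`, or both vanish.
-/

open Finset Function

theorem Finset.prod_orderEmbOfFin {α M : Type*} [LinearOrder α] [CommMonoid M] (C : Finset α)
    {k : ℕ} (h : C.card = k) (f : α → M) : ∏ i, f (C.orderEmbOfFin h i) = ∏ a ∈ C, f a := by
  conv_rhs => rw [← image_orderEmbOfFin_univ C h]
  exact (prod_image fun x _ y _ hxy => (C.orderEmbOfFin h).injective hxy).symm

-- The injective maps `Fin s → α` are the `orderEmbOfFin C ∘ τ` with `τ` a permutation.
theorem Finset.sum_eq_sum_orderEmbOfFin_comp_perm {α M : Type*} [Fintype α] [LinearOrder α]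
    [AddCommMonoid M] {s : ℕ} {g : (Fin s → α) → M} (hg : ∀ p, ¬ Injective p → g p = 0) :
    ∑ p, g p = ∑ C : {C : Finset α // C.card = s}, ∑ τ : Equiv.Perm (Fin s),
      g (C.1.orderEmbOfFin C.2 ∘ τ) := by
  classical
  rw [← sum_filter_of_ne (p := Injective) fun p _ h => by_contra fun hp => h (hg p hp),
    ← Fintype.sum_prod_type']
  refine (sum_bij (fun Cτ _ => Cτ.1.1.orderEmbOfFin Cτ.1.2 ∘ Cτ.2) ?_ ?_ ?_ ?_).symm
  · intro Cτ _
    simpa using (Cτ.1.1.orderEmbOfFin Cτ.1.2).injective.comp Cτ.2.injective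
  · rintro ⟨C, τ⟩ - ⟨C', τ'⟩ - h
    obtain rfl : C = C' := by
      apply Subtype.ext
      simpa [← image_image, image_univ_equiv, image_orderEmbOfFin_univ] using
        congrArg (fun p => image p univ) h
    simp only [Prod.mk.injEq, true_and]
    ext i
    exact congrArg Fin.val ((C.1.orderEmbOfFin C.2).injective (congrFun h i))
  · intro p hp
    simp only [mem_filter, mem_univ, true_and] at hp
    have hcard : (image p univ).card = s := by
      rw [card_image_of_injective _ hp, card_univ, Fintype.card_fin]
    let τ : Fin s → Fin s := fun i =>
      ((image p univ).orderIsoOfFin hcard).symm ⟨p i, mem_image_of_mem p (mem_univ i)⟩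
    have hτ : ∀ i, (image p univ).orderEmbOfFin hcard (τ i) = p i := fun i => by
      simp [τ, ← coe_orderIsoOfFin_apply]
    have hτ_inj : Injective τ := fun i j h => hp (by rw [← hτ i, ← hτ j, h])
    exact ⟨(⟨image p univ, hcard⟩, Equiv.ofBijective τ hτ_inj.bijective_of_finite), mem_univ _,
      funext hτ⟩
  · exact fun _ _ => rfl

namespace Matrix

variable {R α : Type*} [CommRing R] [Fintype α] {s : ℕ}

theorem det_mul_eq_sum_prod_mul_det_submatrix (P : Matrix (Fin s) α R) (Q : Matrix α (Fin s) R) :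
    (P * Q).det = ∑ p : Fin s → α, (∏ i, Q (p i) i) * (P.submatrix id p).det := by
  simp only [det_apply', mul_apply, prod_univ_sum, mul_sum, Fintype.piFinset_univ,
    submatrix_apply, id]
  rw [sum_comm]
  refine sum_congr rfl fun p _ => sum_congr rfl fun σ _ => ?_
  rw [prod_mul_distrib]
  ring

theorem det_mul_eq_sum_det_submatrix [LinearOrder α] (P : Matrix (Fin s) α R)
    (Q : Matrix α (Fin s) R) :
    (P * Q).det = ∑ C : {C : Finset α // C.card = s},
      (P.submatrix id (C.1.orderEmbOfFin C.2)).det *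
        (Q.submatrix (C.1.orderEmbOfFin C.2) id).det := by
  rw [det_mul_eq_sum_prod_mul_det_submatrix, sum_eq_sum_orderEmbOfFin_comp_perm]
  · refine sum_congr rfl fun ⟨C, hC⟩ _ => ?_
    rw [mul_comm, det_apply' (Q.submatrix _ id), sum_mul]
    refine sum_congr rfl fun τ _ => ?_
    rw [show P.submatrix id (C.orderEmbOfFin hC ∘ τ)
      = (P.submatrix id (C.orderEmbOfFin hC)).submatrix id τ from rfl, det_permute']
    simp only [submatrix_apply, id, Function.comp_apply]
    ring
  · intro p hp
    obtain ⟨a, b, hab, hne⟩ := not_injective_iff.mp hp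
    rw [det_zero_of_column_eq (M := P.submatrix id p) hne (fun k => by simp [hab]), mul_zero]

theorem exists_det_submatrix_updateRow_update_eq {ι κ o : Type*} [Fintype o] [DecidableEq o]
    [DecidableEq ι] [DecidableEq κ] (M : Matrix ι κ R) {e : o → ι} (he : Injective e)
    (f : o → κ) (i : ι) (j : κ) :
    ∃ a b : R, ∀ t, ((M.updateRow i (update (M i) j t)).submatrix e f).det = a * t + b := by
  by_cases hi : i ∈ Set.range e
  · obtain ⟨k₀, rfl⟩ := hi
    have hrow : ∀ t, (M.updateRow (e k₀) (update (M (e k₀)) j t)).submatrix e f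
        = (M.submatrix e f).updateRow k₀
          (update (M (e k₀)) j 0 ∘ f + t • (Pi.single j 1 ∘ f)) := by
      intro t
      ext k l
      rcases eq_or_ne k k₀ with rfl | hk
      · rcases eq_or_ne (f l) j with hl | hl <;> simp [hl]
      · simp [hk, he.ne hk]
    refine ⟨((M.submatrix e f).updateRow k₀ (Pi.single j 1 ∘ f)).det,
      ((M.submatrix e f).updateRow k₀ (update (M (e k₀)) j 0 ∘ f)).det, fun t => ?_⟩
    rw [hrow, det_updateRow_add, det_updateRow_smul]
    ring
  · refine ⟨0, (M.submatrix e f).det, fun t => ?_⟩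
    rw [zero_mul, zero_add]
    congr 1
    ext k l
    simp [updateRow_ne (fun h => hi ⟨k, h⟩)]

end Matrix

namespace Real

theorem sign_eq_sign_iff_exists_pos_mul {x z : ℝ} :
    sign x = sign z ↔ ∃ l, 0 < l ∧ l * x = z := by
  constructor
  · intro h
    rcases lt_trichotomy x 0 with hx | rfl | hx <;>
      rcases lt_trichotomy z 0 with hz | rfl | hz <;>
      simp only [sign_of_neg, sign_of_pos, sign_zero, *] at h <;> norm_num at h
    · exact ⟨z / x, div_pos_of_neg_of_neg hz hx, div_mul_cancel₀ z hx.ne⟩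
    · exact ⟨1, one_pos, mul_zero 1⟩
    · exact ⟨z / x, div_pos hz hx, div_mul_cancel₀ z hx.ne'⟩
  · rintro ⟨l, hl, rfl⟩
    rcases lt_trichotomy x 0 with hx | rfl | hx
    · rw [sign_of_neg hx, sign_of_neg (mul_neg_of_pos_of_neg hl hx)]
    · rw [mul_zero]
    · rw [sign_of_pos hx, sign_of_pos (mul_pos hl hx)]

theorem sign_mul_of_pos {l : ℝ} (hl : 0 < l) (x : ℝ) : sign (l * x) = sign x :=
  (sign_eq_sign_iff_exists_pos_mul.mpr ⟨l, hl, rfl⟩).symm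

theorem sign_eq_of_mul_nonneg {d x z : ℝ} (hd : d ≠ 0) (hx : 0 ≤ d * x) (hz : 0 ≤ d * z)
    (h : x = 0 ↔ z = 0) : sign x = sign z := by
  by_cases hx0 : x = 0
  · rw [hx0, h.mp hx0]
  have hz0 : z ≠ 0 := fun hz => hx0 (h.mpr hz)
  have hdx : 0 < d * x := hx.lt_of_ne' (mul_ne_zero hd hx0)
  have hdz : 0 < d * z := hz.lt_of_ne' (mul_ne_zero hd hz0)
  refine sign_eq_sign_iff_exists_pos_mul.mpr ⟨(d * z) / (d * x), div_pos hdz hdx, ?_⟩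
  field_simp

theorem sign_sub_eq_of_strictMonoOn {f : ℝ → ℝ} {S : Set ℝ} (hf : StrictMonoOn f S)
    {x y : ℝ} (hx : x ∈ S) (hy : y ∈ S) : sign (f x - f y) = sign (x - y) := by
  rcases lt_trichotomy x y with h | rfl | h
  · rw [sign_of_neg (sub_neg.mpr (hf hx hy h)), sign_of_neg (sub_neg.mpr h)]
  · simp
  · rw [sign_of_pos (sub_pos.mpr (hf hy hx h)), sign_of_pos (sub_pos.mpr h)]

theorem convex_setOf_sign_eq (c : ℝ) : Convex ℝ {x : ℝ | sign x = c} := by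
  rintro x rfl z hz a b ha hb hab
  obtain ⟨l, hl, rfl⟩ := sign_eq_sign_iff_exists_pos_mul.mp hz.symm
  have hpos : 0 < a + b * l := by
    rcases ha.eq_or_lt with rfl | ha'
    · simpa [show b = 1 by linarith] using hl
    · positivity
  show sign (a * x + b * (l * x)) = sign x
  rw [show a * x + b * (l * x) = (a + b * l) * x by ring, sign_mul_of_pos hpos]

-- A sign class is a point or an open half-line; `t₀ ≠ 0` lies between `t₀ / 2` and `3 t₀ / 2`.
theorem affine_eq_zero_of_nonneg {d a b t₀ t : ℝ} (hd : d ≠ 0)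
    (hnonneg : ∀ t', sign t' = sign t₀ → 0 ≤ d * (a * t' + b)) (h₀ : a * t₀ + b = 0)
    (ht : sign t = sign t₀) : a * t + b = 0 := by
  by_cases ht₀ : t₀ = 0
  · subst ht₀
    rw [sign_zero, sign_eq_zero_iff] at ht
    rwa [ht]
  have h₁ := hnonneg ((1 / 2) * t₀) (sign_mul_of_pos (by norm_num) t₀)
  have h₂ := hnonneg ((3 / 2) * t₀) (sign_mul_of_pos (by norm_num) t₀)
  have hb : b = -(a * t₀) := by linarith
  have ha : d * a * t₀ = 0 := by subst hb; nlinarith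
  have ha : a = 0 := by simpa [hd, ht₀] using ha
  simp [ha, hb]

theorem exists_pos_sub_eq_log_sub_eq {u x : ℝ} (h : sign u = sign x) :
    ∃ a c, 0 < a ∧ 0 < c ∧ a - c = u ∧ log a - log c = x := by
  have hsign : sign (exp x - 1) = sign u := by
    rw [← exp_zero, sign_sub_eq_of_strictMonoOn (exp_strictMono.strictMonoOn Set.univ)
      (Set.mem_univ _) (Set.mem_univ _), sub_zero, h]
  obtain ⟨l, hl, hlu⟩ := sign_eq_sign_iff_exists_pos_mul.mp hsign
  refine ⟨l * exp x, l, by positivity, hl, by rw [← hlu]; ring, ?_⟩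
  rw [log_mul hl.ne' (exp_pos x).ne', log_exp]
  ring

theorem sign_prod_rpow_sub_prod_rpow {ι : Type*} [Fintype ι] {a c : ι → ℝ} (ha : ∀ j, 0 < a j)
    (hc : ∀ j, 0 < c j) (w : ι → ℝ) :
    sign (∏ j, a j ^ w j - ∏ j, c j ^ w j) = sign (∑ j, w j * (log (a j) - log (c j))) := by
  have hexp : ∀ x : ι → ℝ, (∀ j, 0 < x j) → ∏ j, x j ^ w j = exp (∑ j, w j * log (x j)) :=
    fun x hx => by
      rw [exp_sum]
      exact prod_congr rfl fun j _ => by rw [rpow_def_of_pos (hx j), mul_comm]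
  rw [hexp a ha, hexp c hc, sign_sub_eq_of_strictMonoOn (exp_strictMono.strictMonoOn Set.univ)
    (Set.mem_univ _) (Set.mem_univ _), ← sum_sub_distrib]
  simp only [mul_sub]

end Real

theorem IsPreconnected.mul_pos_of_ne_zero {X : Type*} [TopologicalSpace X] {S : Set X}
    (hS : IsPreconnected S) {f : X → ℝ} (hf : ContinuousOn f S) (h0 : ∀ x ∈ S, f x ≠ 0)
    {x y : X} (hx : x ∈ S) (hy : y ∈ S) : 0 < f x * f y := by
  by_contra! h
  obtain ⟨z, hz, hfz⟩ : (0 : ℝ) ∈ f '' S := by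
    rcases mul_nonpos_iff.mp h with ⟨h1, h2⟩ | ⟨h1, h2⟩
    · exact hS.intermediate_value hy hx hf ⟨h2, h1⟩
    · exact hS.intermediate_value hx hy hf ⟨h1, h2⟩
  exact h0 z hz hfz

-- Move from `x₀` to `x₁` one coordinate at a time.
theorem eq_zero_of_affine_of_nonneg {ι : Type*} [Fintype ι] [DecidableEq ι]
    {F : (ι → ℝ) → ℝ} {c : ι → ℝ} {d : ℝ} (hd : d ≠ 0)
    (hF : ∀ x i, ∃ a b, ∀ t, F (update x i t) = a * t + b)
    (hnonneg : ∀ x, (∀ i, Real.sign (x i) = c i) → 0 ≤ d * F x)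
    {x₀ x₁ : ι → ℝ} (hx₀ : ∀ i, Real.sign (x₀ i) = c i) (hx₁ : ∀ i, Real.sign (x₁ i) = c i)
    (h₀ : F x₀ = 0) : F x₁ = 0 := by
  suffices ∀ S : Finset ι, F (S.piecewise x₁ x₀) = 0 by simpa using this univ
  intro S
  induction S using Finset.induction_on with
  | empty => simpa using h₀
  | insert i S _ ih =>
    set x := S.piecewise x₁ x₀
    have hx : ∀ j, Real.sign (x j) = c j := fun j => by
      by_cases hj : j ∈ S <;> simp [x, hj, hx₀, hx₁]
    obtain ⟨a, b, hab⟩ := hF x i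
    rw [piecewise_insert, hab]
    refine Real.affine_eq_zero_of_nonneg hd (fun t ht => ?_) ?_ ((hx₁ i).trans (hx i).symm)
    · rw [← hab]
      refine hnonneg _ fun j => ?_
      rcases eq_or_ne j i with rfl | hj
      · simpa [hx] using ht
      · simpa [hj] using hx j
    · rw [← hab, update_eq_self]
      exact ih

namespace CRN

open Matrix

section Linear

variable {n m s : ℕ} {y y' : Fin m → Fin n → ℝ}

theorem reaction_mem_stoichSpan (r : Fin m) : (fun i => y' r i - y r i) ∈ stoichSpan y y' :=
  Submodule.subset_span ⟨r, rfl⟩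

variable (b : Module.Basis (Fin s) ℝ (stoichSpan y y'))

def basisMat : Matrix (Fin n) (Fin s) ℝ := Matrix.of fun i k => (b k : Fin n → ℝ) i

def coordMat : Matrix (Fin s) (Fin m) ℝ :=
  Matrix.of fun k r => b.repr ⟨_, reaction_mem_stoichSpan r⟩ k

theorem basisMat_mulVec (c : Fin s → ℝ) : basisMat b *ᵥ c = (b.equivFun.symm c : Fin n → ℝ) := by
  ext i
  simp [basisMat, mulVec, dotProduct, Module.Basis.equivFun_symm_apply, mul_comm]

theorem basisMat_mulVec_eq_zero_iff (c : Fin s → ℝ) : basisMat b *ᵥ c = 0 ↔ c = 0 := by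
  rw [basisMat_mulVec, ZeroMemClass.coe_eq_zero, LinearEquiv.map_eq_zero_iff]

theorem stoich_eq_basisMat_mul_coordMat : stoich y y' = basisMat b * coordMat b := by
  ext i r
  change _ = (basisMat b *ᵥ b.equivFun ⟨_, reaction_mem_stoichSpan r⟩) i
  rw [basisMat_mulVec, LinearEquiv.symm_apply_apply]
  rfl

theorem exists_mem_stoichSpan_mulVec_eq_zero_iff (X : Matrix (Fin m) (Fin n) ℝ) :
    (∃ u ∈ stoichSpan y y', u ≠ 0 ∧ (stoich y y' * X) *ᵥ u = 0) ↔
      (coordMat b * X * basisMat b).det = 0 := by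
  have hmul : ∀ c, (stoich y y' * X) *ᵥ (basisMat b *ᵥ c)
      = basisMat b *ᵥ ((coordMat b * X * basisMat b) *ᵥ c) := fun c => by
    simp only [stoich_eq_basisMat_mul_coordMat b, mulVec_mulVec, Matrix.mul_assoc]
  rw [← exists_mulVec_eq_zero_iff]
  constructor
  · rintro ⟨u, hu, hu0, hXu⟩
    have hc : basisMat b *ᵥ b.equivFun ⟨u, hu⟩ = u := by
      rw [basisMat_mulVec, LinearEquiv.symm_apply_apply]
    refine ⟨b.equivFun ⟨u, hu⟩, fun h => hu0 ?_, ?_⟩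
    · rw [← hc, h, mulVec_zero]
    · rw [← basisMat_mulVec_eq_zero_iff b, ← hmul, hc, hXu]
  · rintro ⟨c, hc0, hc⟩
    refine ⟨basisMat b *ᵥ c, ?_, (basisMat_mulVec_eq_zero_iff b c).not.mpr hc0, ?_⟩
    · rw [basisMat_mulVec]
      exact Subtype.coe_prop _
    · rw [hmul, hc, mulVec_zero]

end Linear

section Kinetics

open Real

variable {n m : ℕ} {y y' : Fin m → Fin n → ℝ}

theorem plf_sub_plf (κ : Fin m → ℝ) (w : Fin m → Fin n → ℝ) (a c : Fin n → ℝ) :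
    plf y y' κ w a - plf y y' κ w c
      = stoich y y' *ᵥ fun r => κ r * (∏ j, a j ^ w r j - ∏ j, c j ^ w r j) := by
  ext i
  simp only [Pi.sub_apply, plf, mulVec, dotProduct, stoich, of_apply, ← sum_sub_distrib]
  exact sum_congr rfl fun r _ => by ring

theorem stoich_mul_mulVec_sub_eq_plf_sub {κ ℓ : Fin m → ℝ} {μ a c : Fin n → ℝ}
    {w : Fin m → Fin n → ℝ} (hμ : ∀ j, μ j * (a j - c j) = log (a j) - log (c j))
    (hℓ : ∀ r, ℓ r * ∑ j, w r j * (log (a j) - log (c j))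
      = κ r * (∏ j, a j ^ w r j - ∏ j, c j ^ w r j)) :
    (stoich y y' * (diagonal ℓ * Zmat w * diagonal μ)) *ᵥ (a - c)
      = plf y y' κ w a - plf y y' κ w c := by
  rw [plf_sub_plf, ← mulVec_mulVec]
  congr 1
  ext r
  rw [← hℓ, ← mulVec_mulVec, ← mulVec_mulVec, mulVec_diagonal]
  congr 1
  simp only [mulVec, dotProduct, Zmat, of_apply, diagonal_apply, ite_mul, zero_mul,
    sum_ite_eq, mem_univ, if_true, Pi.sub_apply, hμ]

theorem injOverPL_iff_forall_mulVec_eq_zero (w : Fin m → Fin n → ℝ) :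
    InjOverPL y y' w ↔ ∀ (ℓ : Fin m → ℝ) (μ : Fin n → ℝ), (∀ r, 0 < ℓ r) → (∀ j, 0 < μ j) →
      ∀ u ∈ stoichSpan y y', (stoich y y' * (diagonal ℓ * Zmat w * diagonal μ)) *ᵥ u = 0 →
        u = 0 := by
  constructor
  · intro hinj ℓ μ hℓ hμ u hu hker
    by_contra hu0
    choose a c ha hc hac hlog using fun j =>
      exists_pos_sub_eq_log_sub_eq (sign_mul_of_pos (hμ j) (u j)).symm
    have hsub : a - c = u := funext hac
    have hsign : ∀ r, sign (∏ j, a j ^ w r j - ∏ j, c j ^ w r j)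
        = sign (ℓ r * ∑ j, w r j * (log (a j) - log (c j))) := fun r => by
      rw [sign_mul_of_pos (hℓ r), sign_prod_rpow_sub_prod_rpow ha hc]
    choose κ hκ hκg using fun r => sign_eq_sign_iff_exists_pos_mul.mp (hsign r)
    refine hinj κ hκ a c ha hc (fun h => hu0 ?_) (hsub ▸ hu) (sub_eq_zero.mp ?_)
    · rw [← hsub, h, sub_self]
    · rw [← stoich_mul_mulVec_sub_eq_plf_sub (ℓ := ℓ) (μ := μ) (fun j => by rw [hac, hlog])
        (fun r => (hκg r).symm), hsub, hker]
  · intro hker κ hκ a c ha hc hne hmem heq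
    choose μ hμ hμu using fun j => sign_eq_sign_iff_exists_pos_mul.mp
      (sign_sub_eq_of_strictMonoOn strictMonoOn_log (ha j) (hc j)).symm
    have hsign : ∀ r, sign (∑ j, w r j * (log (a j) - log (c j)))
        = sign (κ r * (∏ j, a j ^ w r j - ∏ j, c j ^ w r j)) := fun r => by
      rw [sign_mul_of_pos (hκ r), sign_prod_rpow_sub_prod_rpow ha hc]
    choose ℓ hℓ hℓκ using fun r => sign_eq_sign_iff_exists_pos_mul.mp (hsign r)
    refine hne (sub_eq_zero.mp (hker ℓ μ hℓ hμ _ hmem ?_))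
    rw [stoich_mul_mulVec_sub_eq_plf_sub hμu hℓκ, heq, sub_self]

end Kinetics

section RestrictedDet

variable {n m s : ℕ} {y y' : Fin m → Fin n → ℝ} (b : Module.Basis (Fin s) ℝ (stoichSpan y y'))

/-- The determinant of `A diag(ℓ) Z(w) diag(μ)` restricted to `Γ`, in the basis `b`. -/
def restrictedDet (w : Fin m → Fin n → ℝ) (ℓ : Fin m → ℝ) (μ : Fin n → ℝ) : ℝ :=
  (coordMat b * (diagonal ℓ * Zmat w * diagonal μ) * basisMat b).det

theorem injOverPL_iff_restrictedDet_ne_zero (w : Fin m → Fin n → ℝ) :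
    InjOverPL y y' w ↔ ∀ (ℓ : Fin m → ℝ) (μ : Fin n → ℝ), (∀ r, 0 < ℓ r) → (∀ j, 0 < μ j) →
      restrictedDet b w ℓ μ ≠ 0 := by
  rw [injOverPL_iff_forall_mulVec_eq_zero]
  refine forall₄_congr fun ℓ μ _ _ => ?_
  rw [restrictedDet, Ne, ← exists_mem_stoichSpan_mulVec_eq_zero_iff b]
  push Not
  exact forall₂_congr fun u _ => by tauto

theorem _root_.Continuous.restrictedDet {X : Type*} [TopologicalSpace X]
    {w : X → Fin m → Fin n → ℝ} {ℓ : X → Fin m → ℝ} {μ : X → Fin n → ℝ} (hw : Continuous w)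
    (hℓ : Continuous ℓ) (hμ : Continuous μ) :
    Continuous fun x => restrictedDet b (w x) (ℓ x) (μ x) := by
  unfold CRN.restrictedDet Zmat
  fun_prop

theorem subDetA_eq_det_submatrix (J : Finset (Fin n)) (C : Finset (Fin m)) (hJ : J.card = s)
    (hC : C.card = s) : subDetA y y' s J C hJ hC
      = ((stoich y y').submatrix (J.orderEmbOfFin hJ) (C.orderEmbOfFin hC)).det := rfl

theorem subDetZ_eq_det_submatrix (w : Fin m → Fin n → ℝ) (C : Finset (Fin m))
    (J : Finset (Fin n)) (hC : C.card = s) (hJ : J.card = s) : subDetZ w s C J hC hJ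
      = ((Zmat w).submatrix (C.orderEmbOfFin hC) (J.orderEmbOfFin hJ)).det := rfl

-- Cauchy–Binet, applied twice.
theorem restrictedDet_eq_sum (w : Fin m → Fin n → ℝ) (ℓ : Fin m → ℝ) (μ : Fin n → ℝ) :
    restrictedDet b w ℓ μ = ∑ C : {C : Finset (Fin m) // C.card = s},
      ∑ J : {J : Finset (Fin n) // J.card = s}, (∏ r ∈ C.1, ℓ r) * (∏ j ∈ J.1, μ j) *
        (subDetA y y' s J.1 C.1 J.2 C.2 * subDetZ w s C.1 J.1 C.2 J.2) := by
  have hassoc : coordMat b * (diagonal ℓ * Zmat w * diagonal μ) * basisMat b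
      = (coordMat b * diagonal ℓ) * (Zmat w * (diagonal μ * basisMat b)) := by
    simp only [Matrix.mul_assoc]
  rw [restrictedDet, hassoc, det_mul_eq_sum_det_submatrix]
  refine sum_congr rfl fun ⟨C, hC⟩ _ => ?_
  have hN : (coordMat b * diagonal ℓ).submatrix id (C.orderEmbOfFin hC)
      = (coordMat b).submatrix id (C.orderEmbOfFin hC) * diagonal (ℓ ∘ C.orderEmbOfFin hC) := by
    ext; simp [mul_diagonal]
  have hZ : (Zmat w * (diagonal μ * basisMat b)).submatrix (C.orderEmbOfFin hC) id
      = (Zmat w).submatrix (C.orderEmbOfFin hC) id * (diagonal μ * basisMat b) := by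
    ext; simp [mul_apply]
  rw [hN, hZ, det_mul, det_diagonal, det_mul_eq_sum_det_submatrix, mul_sum]
  refine sum_congr rfl fun ⟨J, hJ⟩ _ => ?_
  have hB : (diagonal μ * basisMat b).submatrix (J.orderEmbOfFin hJ) id
      = diagonal (μ ∘ J.orderEmbOfFin hJ) * (basisMat b).submatrix (J.orderEmbOfFin hJ) id := by
    ext; simp [diagonal_mul]
  have hA : subDetA y y' s J C hJ hC = ((basisMat b).submatrix (J.orderEmbOfFin hJ) id).det *
      ((coordMat b).submatrix id (C.orderEmbOfFin hC)).det := by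
    rw [subDetA_eq_det_submatrix, stoich_eq_basisMat_mul_coordMat b,
      submatrix_mul _ _ _ _ _ bijective_id, det_mul]
  rw [hB, det_mul, det_diagonal, submatrix_submatrix, hA, subDetZ_eq_det_submatrix]
  simp only [Function.comp_apply, prod_orderEmbOfFin, CompTriple.comp_eq]
  ring

theorem restrictedDet_indicator (w : Fin m → Fin n → ℝ) (C : Finset (Fin m))
    (J : Finset (Fin n)) (hC : C.card = s) (hJ : J.card = s) :
    restrictedDet b w (fun r => if r ∈ C then 1 else 0) (fun j => if j ∈ J then 1 else 0)
      = subDetA y y' s J C hJ hC * subDetZ w s C J hC hJ := by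
  rw [restrictedDet_eq_sum, Fintype.sum_eq_single ⟨C, hC⟩, Fintype.sum_eq_single ⟨J, hJ⟩]
  · simp [prod_boole]
  · intro J' hJ'
    have : ¬ ∀ j ∈ J'.1, j ∈ J := fun h =>
      hJ' (Subtype.ext (eq_of_subset_of_card_le h (by rw [hJ, J'.2])))
    simp [prod_boole, this]
  · intro C' hC'
    have : ¬ ∀ r ∈ C'.1, r ∈ C := fun h =>
      hC' (Subtype.ext (eq_of_subset_of_card_le h (by rw [hC, C'.2])))
    simp [prod_boole, this]

theorem exists_subDet_ne_zero_of_restrictedDet_ne_zero {w : Fin m → Fin n → ℝ} {ℓ : Fin m → ℝ}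
    {μ : Fin n → ℝ} (h : restrictedDet b w ℓ μ ≠ 0) :
    ∃ (C : Finset (Fin m)) (J : Finset (Fin n)) (hC : C.card = s) (hJ : J.card = s),
      subDetA y y' s J C hJ hC ≠ 0 ∧ subDetZ w s C J hC hJ ≠ 0 := by
  rw [restrictedDet_eq_sum] at h
  obtain ⟨⟨C, hC⟩, -, hC_ne⟩ := exists_ne_zero_of_sum_ne_zero h
  obtain ⟨⟨J, hJ⟩, -, hJ_ne⟩ := exists_ne_zero_of_sum_ne_zero hC_ne
  simp only [ne_eq, mul_eq_zero, not_or] at hJ_ne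
  exact ⟨C, J, hC, hJ, hJ_ne.2⟩

-- The indicators of `C` and `J` are limits of points of the open orthant.
theorem mul_subDetA_mul_subDetZ_nonneg {w : Fin m → Fin n → ℝ} {e : ℝ}
    (hpos : ∀ (ℓ : Fin m → ℝ) (μ : Fin n → ℝ), (∀ r, 0 < ℓ r) → (∀ j, 0 < μ j) →
      0 < e * restrictedDet b w ℓ μ)
    (C : Finset (Fin m)) (J : Finset (Fin n)) (hC : C.card = s) (hJ : J.card = s) :
    0 ≤ e * (subDetA y y' s J C hJ hC * subDetZ w s C J hC hJ) := by
  let ℓ : ℝ → Fin m → ℝ := fun ε r => (if r ∈ C then 1 else 0) + ε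
  let μ : ℝ → Fin n → ℝ := fun ε j => (if j ∈ J then 1 else 0) + ε
  have hcont : Continuous fun ε => e * restrictedDet b w (ℓ ε) (μ ε) :=
    continuous_const.mul (continuous_const.restrictedDet b (by fun_prop) (by fun_prop))
  have hlim := (hcont.tendsto 0).mono_left (nhdsWithin_le_nhds (s := Set.Ioi 0))
  simp only [ℓ, μ, add_zero] at hlim
  rw [restrictedDet_indicator b w C J hC hJ] at hlim
  refine ge_of_tendsto hlim (eventually_nhdsWithin_of_forall fun ε (hε : 0 < ε) => ?_)
  refine (hpos _ _ (fun r => ?_) (fun j => ?_)).le <;> split_ifs <;> linarith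

theorem mul_restrictedDet_pos {w : Fin m → Fin n → ℝ} {e : ℝ}
    (hnonneg : ∀ (C : Finset (Fin m)) (J : Finset (Fin n)) (hC : C.card = s) (hJ : J.card = s),
      0 ≤ e * (subDetA y y' s J C hJ hC * subDetZ w s C J hC hJ))
    (hne : ∃ (C : Finset (Fin m)) (J : Finset (Fin n)) (hC : C.card = s) (hJ : J.card = s),
      e * (subDetA y y' s J C hJ hC * subDetZ w s C J hC hJ) ≠ 0)
    {ℓ : Fin m → ℝ} {μ : Fin n → ℝ} (hℓ : ∀ r, 0 < ℓ r) (hμ : ∀ j, 0 < μ j) :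
    0 < e * restrictedDet b w ℓ μ := by
  have hterm : ∀ (C : {C : Finset (Fin m) // C.card = s})
      (J : {J : Finset (Fin n) // J.card = s}),
      e * ((∏ r ∈ C.1, ℓ r) * (∏ j ∈ J.1, μ j) *
        (subDetA y y' s J.1 C.1 J.2 C.2 * subDetZ w s C.1 J.1 C.2 J.2))
      = (∏ r ∈ C.1, ℓ r) * (∏ j ∈ J.1, μ j) *
        (e * (subDetA y y' s J.1 C.1 J.2 C.2 * subDetZ w s C.1 J.1 C.2 J.2)) :=
    fun _ _ => by ring
  have hprod : ∀ (C : {C : Finset (Fin m) // C.card = s})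
      (J : {J : Finset (Fin n) // J.card = s}), 0 < (∏ r ∈ C.1, ℓ r) * (∏ j ∈ J.1, μ j) :=
    fun _ _ => mul_pos (prod_pos fun r _ => hℓ r) (prod_pos fun j _ => hμ j)
  obtain ⟨C, J, hC, hJ, hCJ⟩ := hne
  simp only [restrictedDet_eq_sum, mul_sum, hterm]
  refine sum_pos' (fun C _ => sum_nonneg fun J _ => ?_) ⟨⟨C, hC⟩, mem_univ _, ?_⟩
  · exact mul_nonneg (hprod C J).le (hnonneg _ _ _ _)
  · refine sum_pos' (fun J _ => mul_nonneg (hprod _ J).le (hnonneg _ _ _ _))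
      ⟨⟨J, hJ⟩, mem_univ _, mul_pos (hprod _ _) ?_⟩
    exact (hnonneg C J hC hJ).lt_of_ne' hCJ

theorem restrictedDet_mul_pos {W : Set (Fin m → Fin n → ℝ)} (hW : Convex ℝ W)
    (hne : ∀ w ∈ W, ∀ (ℓ : Fin m → ℝ) (μ : Fin n → ℝ), (∀ r, 0 < ℓ r) → (∀ j, 0 < μ j) →
      restrictedDet b w ℓ μ ≠ 0)
    {w w' : Fin m → Fin n → ℝ} {ℓ ℓ' : Fin m → ℝ} {μ μ' : Fin n → ℝ} (hw : w ∈ W)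
    (hw' : w' ∈ W) (hℓ : ∀ r, 0 < ℓ r) (hℓ' : ∀ r, 0 < ℓ' r) (hμ : ∀ j, 0 < μ j)
    (hμ' : ∀ j, 0 < μ' j) :
    0 < restrictedDet b w ℓ μ * restrictedDet b w' ℓ' μ' := by
  have hS : Convex ℝ (W ×ˢ (Set.univ.pi fun _ : Fin m => Set.Ioi (0 : ℝ)) ×ˢ
      (Set.univ.pi fun _ : Fin n => Set.Ioi (0 : ℝ))) :=
    hW.prod ((convex_pi fun _ _ => convex_Ioi 0).prod (convex_pi fun _ _ => convex_Ioi 0))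
  refine hS.isPreconnected.mul_pos_of_ne_zero (f := fun p => restrictedDet b p.1 p.2.1 p.2.2)
    (continuous_fst.restrictedDet b (continuous_fst.comp continuous_snd)
      (continuous_snd.comp continuous_snd)).continuousOn ?_ (x := (w, ℓ, μ)) (y := (w', ℓ', μ'))
    ⟨hw, fun r _ => hℓ r, fun j _ => hμ j⟩ ⟨hw', fun r _ => hℓ' r, fun j _ => hμ' j⟩
  rintro ⟨w, ℓ, μ⟩ ⟨hw, hℓ, hμ⟩
  exact hne w hw ℓ μ (fun r => hℓ r trivial) (fun j => hμ j trivial)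

end RestrictedDet

section SignPattern

variable {n m s : ℕ}

theorem convex_setOf_inSigma (I : Fin m → Fin n → ℝ) : Convex ℝ {w | InSigma I w} := by
  have h : {w | InSigma I w}
      = Set.univ.pi fun r => Set.univ.pi fun i => {x | Real.sign x = I r i} := by
    ext w
    simp [InSigma]
  rw [h]
  exact convex_pi fun r _ => convex_pi fun i _ => Real.convex_setOf_sign_eq _

theorem subDetZ_eq_zero_of_nonneg {I : Fin m → Fin n → ℝ} {C : Finset (Fin m)}
    {J : Finset (Fin n)} {hC : C.card = s} {hJ : J.card = s} {d : ℝ} (hd : d ≠ 0)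
    (hnonneg : ∀ w, InSigma I w → 0 ≤ d * subDetZ w s C J hC hJ) {w₀ w₁ : Fin m → Fin n → ℝ}
    (hw₀ : InSigma I w₀) (hw₁ : InSigma I w₁) (h₀ : subDetZ w₀ s C J hC hJ = 0) :
    subDetZ w₁ s C J hC hJ = 0 := by
  refine eq_zero_of_affine_of_nonneg (F := fun W => subDetZ (curry W) s C J hC hJ)
    (c := uncurry I) (x₀ := uncurry w₀) hd (fun W p => ?_)
    (fun W hW => hnonneg _ fun r i => hW (r, i)) (fun p => hw₀ p.1 p.2) (fun p => hw₁ p.1 p.2) h₀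
  simp only [curry_update, subDetZ_eq_det_submatrix]
  exact (Zmat (curry W)).exists_det_submatrix_updateRow_update_eq
    (C.orderEmbOfFin hC).injective _ p.1 p.2

end SignPattern

section Directions

variable {n m s : ℕ} {y y' : Fin m → Fin n → ℝ} (hs : Module.finrank ℝ (stoichSpan y y') = s)
  {I v : Fin m → Fin n → ℝ}
include hs

theorem sign_subDetZ_eq_of_injOverPL (hinj : ∀ w, InSigma I w → InjOverPL y y' w)
    (hv : InSigma I v) {C : Finset (Fin m)} {J : Finset (Fin n)} {hC : C.card = s}
    {hJ : J.card = s} (hA : subDetA y y' s J C hJ hC ≠ 0) {w w' : Fin m → Fin n → ℝ}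
    (hw : InSigma I w) (hw' : InSigma I w') :
    Real.sign (subDetZ w s C J hC hJ) = Real.sign (subDetZ w' s C J hC hJ) := by
  let b := Module.finBasisOfFinrankEq ℝ _ hs
  have hne : ∀ w ∈ {w | InSigma I w}, ∀ (ℓ : Fin m → ℝ) (μ : Fin n → ℝ), (∀ r, 0 < ℓ r) →
      (∀ j, 0 < μ j) → restrictedDet b w ℓ μ ≠ 0 :=
    fun w hw => (injOverPL_iff_restrictedDet_ne_zero b w).mp (hinj w hw)
  set e := restrictedDet b v 1 1
  have hpos : ∀ w, InSigma I w → ∀ (ℓ : Fin m → ℝ) (μ : Fin n → ℝ), (∀ r, 0 < ℓ r) →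
      (∀ j, 0 < μ j) → 0 < e * restrictedDet b w ℓ μ := fun w hw ℓ μ hℓ hμ =>
    restrictedDet_mul_pos b (convex_setOf_inSigma I) hne hv hw (fun _ => one_pos) hℓ
      (fun _ => one_pos) hμ
  have hnonneg : ∀ w, InSigma I w →
      0 ≤ (e * subDetA y y' s J C hJ hC) * subDetZ w s C J hC hJ := fun w hw => by
    rw [mul_assoc]
    exact mul_subDetA_mul_subDetZ_nonneg b (hpos w hw) C J hC hJ
  have hd : e * subDetA y y' s J C hJ hC ≠ 0 :=
    mul_ne_zero (hne v hv 1 1 (fun _ => one_pos) (fun _ => one_pos)) hA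
  exact Real.sign_eq_of_mul_nonneg hd (hnonneg w hw) (hnonneg w' hw')
    ⟨subDetZ_eq_zero_of_nonneg hd hnonneg hw hw', subDetZ_eq_zero_of_nonneg hd hnonneg hw' hw⟩

theorem injOverPL_of_sign_subDetZ_eq (hv : InSigma I v) (hinj : InjOverPL y y' v)
    (hsign : ∀ (C : Finset (Fin m)) (J : Finset (Fin n)) (hC : C.card = s) (hJ : J.card = s),
      subDetA y y' s J C hJ hC ≠ 0 → ∀ w w', InSigma I w → InSigma I w' →
        Real.sign (subDetZ w s C J hC hJ) = Real.sign (subDetZ w' s C J hC hJ))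
    {w : Fin m → Fin n → ℝ} (hw : InSigma I w) : InjOverPL y y' w := by
  let b := Module.finBasisOfFinrankEq ℝ _ hs
  have hne := (injOverPL_iff_restrictedDet_ne_zero b v).mp hinj
  set e := restrictedDet b v 1 1
  have he : e ≠ 0 := hne 1 1 (fun _ => one_pos) (fun _ => one_pos)
  obtain ⟨C₀, J₀, hC₀, hJ₀, hv₀⟩ := exists_subDet_ne_zero_of_restrictedDet_ne_zero b he
  have hpos : ∀ (ℓ : Fin m → ℝ) (μ : Fin n → ℝ), (∀ r, 0 < ℓ r) → (∀ j, 0 < μ j) →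
      0 < e * restrictedDet b v ℓ μ := fun ℓ μ hℓ hμ =>
    restrictedDet_mul_pos b (convex_singleton v) (by simpa using hne) rfl rfl
      (fun _ => one_pos) hℓ (fun _ => one_pos) hμ
  have hnonneg : ∀ (C : Finset (Fin m)) (J : Finset (Fin n)) (hC : C.card = s)
      (hJ : J.card = s), 0 ≤ e * (subDetA y y' s J C hJ hC * subDetZ w s C J hC hJ) := by
    intro C J hC hJ
    by_cases hA : subDetA y y' s J C hJ hC = 0
    · simp [hA]
    obtain ⟨l, hl, hlw⟩ :=
      Real.sign_eq_sign_iff_exists_pos_mul.mp (hsign C J hC hJ hA v w hv hw)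
    rw [← hlw, show e * (subDetA y y' s J C hJ hC * (l * subDetZ v s C J hC hJ))
      = l * (e * (subDetA y y' s J C hJ hC * subDetZ v s C J hC hJ)) by ring]
    exact mul_nonneg hl.le (mul_subDetA_mul_subDetZ_nonneg b hpos C J hC hJ)
  have hexists : ∃ (C : Finset (Fin m)) (J : Finset (Fin n)) (hC : C.card = s)
      (hJ : J.card = s), e * (subDetA y y' s J C hJ hC * subDetZ w s C J hC hJ) ≠ 0 := by
    refine ⟨C₀, J₀, hC₀, hJ₀, mul_ne_zero he (mul_ne_zero hv₀.1 fun hz => hv₀.2 ?_)⟩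
    rwa [← Real.sign_eq_zero_iff, hsign C₀ J₀ hC₀ hJ₀ hv₀.1 v w hv hw, Real.sign_eq_zero_iff]
  exact (injOverPL_iff_restrictedDet_ne_zero b w).mpr fun ℓ μ hℓ hμ =>
    right_ne_zero_of_mul (mul_restrictedDet_pos b hnonneg hexists hℓ hμ).ne'

end Directions

theorem stmt8_general {n m s : ℕ}
    (y y' : Fin m → Fin n → ℝ)
    (hs : Module.finrank ℝ (stoichSpan y y') = s)
    (I : Fin m → Fin n → ℝ)
    (v : Fin m → Fin n → ℝ) (hv : InSigma I v) :
    (∀ w, InSigma I w → InjOverPL y y' w) ↔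
      (InjOverPL y y' v ∧
        ∀ (C : Finset (Fin m)) (J : Finset (Fin n)) (hC : C.card = s) (hJ : J.card = s),
          subDetA y y' s J C hJ hC ≠ 0 →
          ∀ w w', InSigma I w → InSigma I w' →
            Real.sign (subDetZ w s C J hC hJ) = Real.sign (subDetZ w' s C J hC hJ)) :=
  ⟨fun hinj => ⟨hinj v hv, fun _ _ _ _ hA _ _ hw hw' =>
      sign_subDetZ_eq_of_injOverPL hs hinj hv hA hw hw'⟩,
    fun ⟨hinjv, hsign⟩ _ hw => injOverPL_of_sign_subDetZ_eq hs hv hinjv hsign hw⟩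

/-- Corollary `openpos3`. -/
theorem stmt8 {n m s : ℕ}
    (y y' : Fin m → Fin n → ℝ)
    (hs : Module.finrank ℝ (stoichSpan y y') = s)
    (I : Fin m → Fin n → ℝ) (hI : IsInfluence I)
    (v : Fin m → Fin n → ℝ) (hv : InSigma I v) :
    (∀ w, InSigma I w → InjOverPL y y' w) ↔
      (InjOverPL y y' v ∧
        ∀ (C : Finset (Fin m)) (J : Finset (Fin n)) (hC : C.card = s) (hJ : J.card = s),
          subDetA y y' s J C hJ hC ≠ 0 →
          ∀ w w', InSigma I w → InSigma I w' →
            Real.sign (subDetZ w s C J hC hJ) = Real.sign (subDetZ w' s C J hC hJ)) :=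
  stmt8_general y y' hs I v hv
end CRN
end
end

section
/- Let N be a network and let I_1 ≼ I_2 be two influence specifications for N. Then the following statements are equivalent: (i) N is injective over the union of the sets K_g(N,I) over all influence specifications I with I_1 ≼ I ≼ I_2, i.e., N is injective over K_g(N)[v] for every kinetic order v with I_1 ≼ I(v) ≼ I_2; (ii) I_2 has a signed determinant and N is injective over K_g(N)[v_1] for some kinetic order v_1 ∈ Σ(I_1); (iii) N is injective over K_g(N,I_1) and over K_g(N,I_2). -/
noncomputable section

namespace CRN

variable {n m : ℕ}

/-! ### Auxiliary machinery -/


section Abstract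
variable {ι : Type*} [Fintype ι] [DecidableEq ι]

/-- `H` is affine in each coordinate. -/
def AffEach (H : (ι → ℝ) → ℝ) : Prop :=
  ∀ t j, ∃ a b : ℝ, ∀ x, H (Function.update t j x) = a + b * x

lemma affine_nonneg_closure {a b : ℝ} (h : ∀ u, 0 < u → 0 ≤ a + b * u) :
    ∀ u, 0 ≤ u → 0 ≤ a + b * u := by
  have ha : 0 ≤ a := by
    by_contra hc
    push_neg at hc
    rcases le_or_gt b 0 with hb | hb
    · have := h 1 one_pos; nlinarith
    · have hpos : 0 < -a / (2 * b) := div_pos (by linarith) (by linarith)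
      have h3 : -a / (2 * b) * (2 * b) = -a := div_mul_cancel₀ _ (by positivity)
      have := h (-a / (2 * b)) hpos
      nlinarith
  intro u hu
  rcases eq_or_lt_of_le hu with rfl | hu
  · simpa using ha
  · exact h u hu

lemma affine_zero_of_nonneg {a b c : ℝ} (h : ∀ u, 0 ≤ u → 0 ≤ a + b * u)
    (h0 : a + b * c = 0) (hc : 0 < c) : a = 0 ∧ b = 0 := by
  have ha : 0 ≤ a := by simpa using h 0 le_rfl
  have hb : 0 ≤ b := by
    by_contra hbc
    push_neg at hbc
    have hpos : 0 < (a + 1) / (-b) := div_pos (by linarith) (by linarith)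
    have := h ((a + 1) / (-b)) (le_of_lt hpos)
    have h3 : (a + 1) / (-b) * (-b) = a + 1 := div_mul_cancel₀ _ (by linarith)
    nlinarith
  constructor <;> nlinarith

lemma affine_ne_uIcc {a b u₀ u₁ : ℝ} (h : ∀ u ∈ Set.uIcc u₀ u₁, a + b * u ≠ 0) :
    0 < (a + b * u₀) * (a + b * u₁) := by
  rcases eq_or_ne b 0 with rfl | hb
  · have := h u₀ Set.left_mem_uIcc
    simp only [zero_mul, add_zero] at this ⊢
    exact mul_self_pos.2 this
  · by_contra hle
    push_neg at hle
    have hb2 : 0 < b ^ 2 := by positivity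
    have hval : a + b * (-a / b) = 0 := by field_simp; ring
    apply h (-a / b) _ hval
    have key : (a + b * u₀) * (a + b * u₁) = b ^ 2 * ((u₀ - -a / b) * (u₁ - -a / b)) := by
      field_simp
      ring
    have h2 : (u₀ - -a / b) * (u₁ - -a / b) ≤ 0 := by nlinarith
    rw [Set.mem_uIcc]
    rcases mul_nonpos_iff.mp h2 with ⟨h3, h4⟩ | ⟨h3, h4⟩
    · right; constructor <;> linarith
    · left; constructor <;> linarith

lemma aff_vanish {H : (ι → ℝ) → ℝ} (hA : AffEach H)
    (hz : ∀ t, (∀ j, 0 < t j) → H t = 0) : ∀ p, H p = 0 := by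
  suffices hS : ∀ S : Finset ι, ∀ p : ι → ℝ, (∀ j ∉ S, 0 < p j) → H p = 0 by
    intro p; exact hS Finset.univ p (by simp)
  intro S
  induction S using Finset.induction_on with
  | empty => intro p hp; exact hz p (fun j => hp j (Finset.notMem_empty j))
  | @insert j S hjS ih =>
    intro p hp
    obtain ⟨a, b, hab⟩ := hA p j
    have hval : ∀ u, 0 < u → a + b * u = 0 := by
      intro u hu
      rw [← hab u]
      apply ih
      intro i hi
      rcases eq_or_ne i j with rfl | hij
      · simpa using hu
      · rw [Function.update_of_ne hij]
        exact hp i (by simp [hi, hij])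
    have h1 := hval 1 one_pos
    have h2 := hval 2 two_pos
    have ha : a = 0 := by linarith
    have hb : b = 0 := by linarith
    have := hab (p j)
    rw [Function.update_eq_self] at this
    rw [this, ha, hb]; ring

lemma aff_nonneg {H : (ι → ℝ) → ℝ} (hA : AffEach H)
    (hp : ∀ t, (∀ j, 0 < t j) → 0 ≤ H t) :
    ∀ p : ι → ℝ, (∀ j, 0 ≤ p j) → 0 ≤ H p := by
  suffices hS : ∀ S : Finset ι, ∀ p : ι → ℝ, (∀ j ∈ S, 0 ≤ p j) → (∀ j ∉ S, 0 < p j) →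
      0 ≤ H p by
    intro p h; exact hS Finset.univ p (fun j _ => h j) (by simp)
  intro S
  induction S using Finset.induction_on with
  | empty => intro p _ h2; exact hp p (fun j => h2 j (Finset.notMem_empty j))
  | @insert j S hjS ih =>
    intro p h1 h2
    obtain ⟨a, b, hab⟩ := hA p j
    have key : ∀ u, 0 < u → 0 ≤ a + b * u := by
      intro u hu
      rw [← hab u]
      apply ih
      · intro i hi
        rw [Function.update_of_ne (fun he => hjS (by rwa [← he]))]
        exact h1 i (Finset.mem_insert_of_mem hi)
      · intro i hi
        rcases eq_or_ne i j with rfl | hij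
        · simpa using hu
        · rw [Function.update_of_ne hij]
          exact h2 i (by simp [hi, hij])
    have := affine_nonneg_closure key (p j) (h1 j (Finset.mem_insert_self j S))
    rw [← hab (p j), Function.update_eq_self] at this
    exact this

lemma aff_zero_prop {H : (ι → ℝ) → ℝ} (hA : AffEach H)
    (hnn : ∀ p : ι → ℝ, (∀ j, 0 ≤ p j) → 0 ≤ H p)
    (s : ι → ℝ) (hs : ∀ j, 0 ≤ s j) :
    ∀ p : ι → ℝ, (∀ j, 0 ≤ p j) → H p = 0 → (∀ j, p j = 0 → s j = 0) → H s = 0 := by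
  suffices hS : ∀ S : Finset ι, ∀ p : ι → ℝ, (∀ j, 0 ≤ p j) → H p = 0 →
      (∀ j ∉ S, p j = s j) → (∀ j ∈ S, 0 < p j) → H s = 0 by
    intro p hp h0 hsup
    classical
    apply hS (Finset.univ.filter (fun j => p j ≠ 0)) p hp h0
    · intro j hj
      simp only [Finset.mem_filter, Finset.mem_univ, true_and, not_not] at hj
      rw [hj, hsup j hj]
    · intro j hj
      simp only [Finset.mem_filter] at hj
      exact lt_of_le_of_ne (hp j) (Ne.symm hj.2)
  intro S
  induction S using Finset.induction_on with
  | empty =>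
    intro p _ h0 hout _
    have : p = s := funext fun j => hout j (Finset.notMem_empty j)
    rwa [← this]
  | @insert j S hjS ih =>
    intro p hp h0 hout hin
    obtain ⟨a, b, hab⟩ := hA p j
    have hnn' : ∀ u, 0 ≤ u → 0 ≤ a + b * u := by
      intro u hu
      rw [← hab u]
      apply hnn
      intro i
      rcases eq_or_ne i j with rfl | hij
      · simpa using hu
      · rw [Function.update_of_ne hij]; exact hp i
    have h0' : a + b * p j = 0 := by
      rw [← hab (p j), Function.update_eq_self]; exact h0
    obtain ⟨ha, hb⟩ := affine_zero_of_nonneg hnn' h0' (hin j (Finset.mem_insert_self j S))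
    apply ih (Function.update p j (s j))
    · intro i
      rcases eq_or_ne i j with rfl | hij
      · simpa using hs i
      · rw [Function.update_of_ne hij]; exact hp i
    · rw [hab (s j), ha, hb]; ring
    · intro i hi
      rcases eq_or_ne i j with rfl | hij
      · simp
      · rw [Function.update_of_ne hij]
        exact hout i (by simp [hi, hij])
    · intro i hi
      rw [Function.update_of_ne (fun he => hjS (by rwa [← he]))]
      exact hin i (Finset.mem_insert_of_mem hi)

lemma aff_sign_const {H : (ι → ℝ) → ℝ} (hA : AffEach H) (t t' : ι → ℝ)
    (hne : ∀ p : ι → ℝ, (∀ j, p j ∈ Set.uIcc (t j) (t' j)) → H p ≠ 0) :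
    0 < H t * H t' := by
  suffices hS : ∀ S : Finset ι, ∀ p : ι → ℝ, (∀ j ∈ S, p j = t' j) → (∀ j ∉ S, p j = t j) →
      0 < H t * H p by
    exact hS Finset.univ t' (fun j _ => rfl) (by simp)
  intro S
  induction S using Finset.induction_on with
  | empty =>
    intro p _ hout
    have : p = t := funext fun j => hout j (Finset.notMem_empty j)
    subst this
    exact mul_self_pos.2 (hne p (fun j => Set.left_mem_uIcc))
  | @insert j S hjS ih =>
    intro p hin hout
    have hp0 : 0 < H t * H (Function.update p j (t j)) := by
      apply ih
      · intro i hi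
        rw [Function.update_of_ne (fun he => hjS (by rwa [← he]))]
        exact hin i (Finset.mem_insert_of_mem hi)
      · intro i hi
        rcases eq_or_ne i j with rfl | hij
        · simp
        · rw [Function.update_of_ne hij]
          exact hout i (by simp [hi, hij])
    obtain ⟨a, b, hab⟩ := hA p j
    have hseg : ∀ u ∈ Set.uIcc (t j) (t' j), a + b * u ≠ 0 := by
      intro u hu
      rw [← hab u]
      apply hne
      intro i
      rcases eq_or_ne i j with rfl | hij
      · simpa using hu
      · rw [Function.update_of_ne hij]
        by_cases hiS : i ∈ S
        · rw [hin i (Finset.mem_insert_of_mem hiS)]; exact Set.right_mem_uIcc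
        · rw [hout i (by simp [hiS, hij])]; exact Set.left_mem_uIcc
    have hprod := affine_ne_uIcc hseg
    have e1 : H (Function.update p j (t j)) = a + b * t j := hab (t j)
    have e2 : H p = a + b * t' j := by
      have hpj := hin j (Finset.mem_insert_self j S)
      rw [← hab (t' j), ← hpj, Function.update_eq_self]
    rw [← e1, ← e2] at hprod
    nlinarith [hp0, hprod, sq_nonneg (H (Function.update p j (t j)))]

end Abstract

lemma mem_orthComp {F : Submodule ℝ (Fin n → ℝ)} {w : Fin n → ℝ} :
    w ∈ orthComp F ↔ ∀ v ∈ F, ∑ i, w i * v i = 0 := Iff.rfl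

lemma orthComp_eq_map (F : Submodule ℝ (Fin n → ℝ)) :
    orthComp F = Submodule.map ((WithLp.linearEquiv 2 ℝ (Fin n → ℝ) :
        EuclideanSpace ℝ (Fin n) ≃ₗ[ℝ] (Fin n → ℝ)) :
          EuclideanSpace ℝ (Fin n) →ₗ[ℝ] (Fin n → ℝ))
      ((Submodule.comap ((WithLp.linearEquiv 2 ℝ (Fin n → ℝ) :
        EuclideanSpace ℝ (Fin n) ≃ₗ[ℝ] (Fin n → ℝ)) :
          EuclideanSpace ℝ (Fin n) →ₗ[ℝ] (Fin n → ℝ)) F)ᗮ) := by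
  set e := (WithLp.linearEquiv 2 ℝ (Fin n → ℝ) : EuclideanSpace ℝ (Fin n) ≃ₗ[ℝ] (Fin n → ℝ))
  ext x
  rw [Submodule.mem_map_equiv, Submodule.mem_orthogonal]
  constructor
  · intro hx u hu
    have := hx (e u) hu
    simpa [e, PiLp.inner_apply, RCLike.inner_apply, mul_comm] using this
  · intro hx v hv
    have := hx (e.symm v) (by simpa [e] using hv)
    simpa [e, PiLp.inner_apply, RCLike.inner_apply, mul_comm] using this

lemma orthComp_orthComp (F : Submodule ℝ (Fin n → ℝ)) : orthComp (orthComp F) = F := by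
  set e := (WithLp.linearEquiv 2 ℝ (Fin n → ℝ) : EuclideanSpace ℝ (Fin n) ≃ₗ[ℝ] (Fin n → ℝ))
  rw [orthComp_eq_map, orthComp_eq_map]
  have h1 : Submodule.comap (e : EuclideanSpace ℝ (Fin n) →ₗ[ℝ] (Fin n → ℝ))
      (Submodule.map (e : EuclideanSpace ℝ (Fin n) →ₗ[ℝ] (Fin n → ℝ))
        (Submodule.comap (e : EuclideanSpace ℝ (Fin n) →ₗ[ℝ] (Fin n → ℝ)) F)ᗮ)
      = (Submodule.comap (e : EuclideanSpace ℝ (Fin n) →ₗ[ℝ] (Fin n → ℝ)) F)ᗮ :=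
    Submodule.comap_map_eq_of_injective e.injective _
  rw [h1, Submodule.orthogonal_orthogonal]
  exact Submodule.map_comap_eq_of_surjective e.surjective F


/-! ### sign helpers -/

lemma sign_eq_one_iff' {x : ℝ} : Real.sign x = 1 ↔ 0 < x := by
  rcases lt_trichotomy x 0 with h | rfl | h
  · rw [Real.sign_of_neg h]; constructor <;> intro h2 <;> [norm_num at h2; linarith]
  · rw [Real.sign_zero]; constructor <;> intro h2 <;> [norm_num at h2; linarith]
  · rw [Real.sign_of_pos h]; simp [h]

lemma sign_eq_neg_one_iff' {x : ℝ} : Real.sign x = -1 ↔ x < 0 := by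
  rcases lt_trichotomy x 0 with h | rfl | h
  · rw [Real.sign_of_neg h]; simp [h]
  · rw [Real.sign_zero]; constructor <;> intro h2 <;> [norm_num at h2; linarith]
  · rw [Real.sign_of_pos h]; constructor <;> intro h2 <;> [norm_num at h2; linarith]

lemma sign_mul_pos' {c : ℝ} (hc : 0 < c) (x : ℝ) : Real.sign (c * x) = Real.sign x := by
  rcases lt_trichotomy x 0 with h | rfl | h
  · rw [Real.sign_of_neg h, Real.sign_of_neg (mul_neg_of_pos_of_neg hc h)]
  · simp
  · rw [Real.sign_of_pos h, Real.sign_of_pos (mul_pos hc h)]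

lemma sign_eq_of_mul_pos {x y : ℝ} (h : 0 < x * y) : Real.sign x = Real.sign y := by
  rcases mul_pos_iff.mp h with ⟨h1, h2⟩ | ⟨h1, h2⟩
  · rw [Real.sign_of_pos h1, Real.sign_of_pos h2]
  · rw [Real.sign_of_neg h1, Real.sign_of_neg h2]

lemma sign_exp_sub_exp (p q : ℝ) :
    Real.sign (Real.exp p - Real.exp q) = Real.sign (p - q) := by
  rcases lt_trichotomy p q with h | rfl | h
  · rw [Real.sign_of_neg (by simpa using sub_neg.mpr (Real.exp_lt_exp.mpr h)),
      Real.sign_of_neg (sub_neg.mpr h)]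
  · simp
  · rw [Real.sign_of_pos (by simpa using sub_pos.mpr (Real.exp_lt_exp.mpr h)),
      Real.sign_of_pos (sub_pos.mpr h)]

lemma prod_rpow_eq_exp {c : Fin n → ℝ} (hc : Pos c) (v : Fin n → ℝ) :
    ∏ j, c j ^ v j = Real.exp (∑ j, v j * Real.log (c j)) := by
  rw [Real.exp_sum]
  refine Finset.prod_congr rfl fun j _ => ?_
  rw [Real.rpow_def_of_pos (hc j), mul_comm]

/-! ### matrix helpers -/

lemma Mt_apply (y y' : Fin m → Fin n → ℝ) (d : ℕ) (ω : Fin d → Fin n → ℝ)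
    (v : Fin m → Fin n → ℝ) (k j : Fin n) :
    Mt y y' d ω v k j =
      if h : (k : ℕ) < d then ω ⟨(k : ℕ), h⟩ j else ∑ r, (y' r k - y r k) * v r j := by
  simp only [Mt, tildeMat, Matrix.of_apply, Matrix.mul_apply, stoich, Zmat]

lemma det_affine (y y' : Fin m → Fin n → ℝ) (d : ℕ) (ω : Fin d → Fin n → ℝ)
    (v : Fin m → Fin n → ℝ) (r₀ : Fin m) (i₀ : Fin n) :
    ∃ a b : ℝ, ∀ x : ℝ,
      (Mt y y' d ω (fun r i => if r = r₀ ∧ i = i₀ then x else v r i)).det = a + b * x := by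
  classical
  set g0 : Fin n → ℝ := fun k : Fin n =>
    if h : (k : ℕ) < d then ω ⟨(k : ℕ), h⟩ i₀
    else ∑ r, (y' r k - y r k) * (if r = r₀ then 0 else v r i₀) with hg0
  set g1 : Fin n → ℝ := fun k : Fin n =>
    if (k : ℕ) < d then 0 else (y' r₀ k - y r₀ k) with hg1
  refine ⟨((Mt y y' d ω v).updateCol i₀ g0).det,
    ((Mt y y' d ω v).updateCol i₀ g1).det, fun x => ?_⟩
  have hMup : Mt y y' d ω (fun r i => if r = r₀ ∧ i = i₀ then x else v r i) =
      (Mt y y' d ω v).updateCol i₀ (fun k : Fin n => g0 k + x * g1 k) := by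
    ext k j
    rw [Mt_apply, Matrix.updateCol_apply]
    by_cases hj : j = i₀
    · rw [if_pos hj, hg0, hg1]
      by_cases hk : (k : ℕ) < d
      · rw [dif_pos hk]
        simp only [dif_pos hk, if_pos hk, hj]
        ring
      · rw [dif_neg hk]
        simp only [dif_neg hk, if_neg hk, hj, and_true]
        have hterm : ∀ r : Fin m, (y' r k - y r k) * (if r = r₀ then x else v r i₀)
            = (y' r k - y r k) * (if r = r₀ then 0 else v r i₀)
              + (if r = r₀ then x * (y' r₀ k - y r₀ k) else 0) := by
          intro r
          by_cases hr : r = r₀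
          · subst hr; simp; ring
          · simp [hr]
        rw [Finset.sum_congr rfl fun r _ => hterm r, Finset.sum_add_distrib,
          Finset.sum_ite_eq' Finset.univ r₀]
        simp [mul_comm]
    · rw [if_neg hj, Mt_apply]
      by_cases hk : (k : ℕ) < d
      · rw [dif_pos hk, dif_pos hk]
      · rw [dif_neg hk, dif_neg hk]
        refine Finset.sum_congr rfl fun r _ => ?_
        rw [if_neg (fun hc => hj hc.2)]
  have hcol : (fun k : Fin n => g0 k + x * g1 k) = g0 + x • g1 := by
    funext k; simp
  rw [hMup, hcol, Matrix.det_updateCol_add, Matrix.det_updateCol_smul]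
  ring

lemma mulVec_mem_stoichSpan (y y' : Fin m → Fin n → ℝ) (z : Fin m → ℝ) :
    Matrix.mulVec (stoich y y') z ∈ stoichSpan y y' := by
  have h : Matrix.mulVec (stoich y y') z = ∑ r, z r • (fun i => y' r i - y r i) := by
    funext i
    rw [Matrix.mulVec, dotProduct, Finset.sum_apply]
    refine Finset.sum_congr rfl fun r _ => ?_
    simp [stoich, mul_comm]
  rw [h]
  exact Submodule.sum_mem _ fun r _ =>
    Submodule.smul_mem _ _ (Submodule.subset_span ⟨r, rfl⟩)

lemma eq_zero_of_mem_stoichSpan_of_bot_zero (d : ℕ)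
    (y y' : Fin m → Fin n → ℝ) (ω : Fin d → Fin n → ℝ)
    (hω : IsReducedBasis d (stoichSpan y y') ω)
    (x : Fin n → ℝ) (hx : x ∈ stoichSpan y y')
    (hbot : ∀ k : Fin n, ¬ ((k : ℕ) < d) → x k = 0) : x = 0 := by
  funext j
  by_cases hj : (j : ℕ) < d
  · have h0 := hω.1 ⟨(j : ℕ), hj⟩ x hx
    have : ∑ i, ω ⟨(j : ℕ), hj⟩ i * x i = x j := by
      rw [Finset.sum_eq_single j]
      · rw [hω.2.2.2.1 ⟨(j : ℕ), hj⟩ j rfl, one_mul]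
      · intro i _ hij
        by_cases hi : (i : ℕ) < d
        · rw [hω.2.2.2.2 ⟨(j : ℕ), hj⟩ i hi (fun hc => hij (Fin.ext hc)), zero_mul]
        · rw [hbot i hi, mul_zero]
      · intro h; exact absurd (Finset.mem_univ j) h
    rw [this] at h0
    simpa using h0
  · simpa using hbot j hj

/-! ### determinant zero implies non-injectivity -/

lemma dot_orth (u : Fin n → ℝ) (F : Submodule ℝ (Fin n → ℝ)) (ww : Fin d → Fin n → ℝ)
    (hspan : Submodule.span ℝ (Set.range ww) = F)
    (horth : ∀ i : Fin d, ∑ j, u j * ww i j = 0) :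
    ∀ x ∈ F, ∑ j, u j * x j = 0 := by
  intro x hx
  rw [← hspan] at hx
  induction hx using Submodule.span_induction with
  | mem x hxx =>
    obtain ⟨i, rfl⟩ := hxx
    exact horth i
  | zero => simp
  | add x z hx hz ihx ihz =>
    simp only [Pi.add_apply, mul_add, Finset.sum_add_distrib, ihx, ihz, add_zero]
  | smul c x hx ih =>
    simp only [Pi.smul_apply, smul_eq_mul]
    have : ∑ j, u j * (c * x j) = c * ∑ j, u j * x j := by
      rw [Finset.mul_sum]
      exact Finset.sum_congr rfl fun j _ => by ring
    rw [this, ih, mul_zero]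

lemma not_inj_of_det_eq_zero (y y' : Fin m → Fin n → ℝ) {d : ℕ} (hdn : d ≤ n)
    (ω : Fin d → Fin n → ℝ) (hω : IsReducedBasis d (stoichSpan y y') ω)
    (w : Fin m → Fin n → ℝ) (hdet : (Mt y y' d ω w).det = 0) :
    ¬ InjOverPL y y' w := by
  classical
  obtain ⟨u, hu0, huv⟩ := Matrix.exists_mulVec_eq_zero_iff.mpr hdet
  have hrow : ∀ k : Fin n, ∑ j, Mt y y' d ω w k j * u j = 0 := by
    intro k
    have := congrFun huv k
    simpa [Matrix.mulVec, dotProduct] using this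
  -- u is orthogonal to all rows of ω
  have horth : ∀ i : Fin d, ∑ j, u j * ω i j = 0 := by
    intro i
    have hk : (i : ℕ) < n := lt_of_lt_of_le i.2 hdn
    have h := hrow ⟨(i : ℕ), hk⟩
    have he : ∀ j, Mt y y' d ω w ⟨(i : ℕ), hk⟩ j = ω i j := by
      intro j
      rw [Mt_apply]
      rw [dif_pos (show ((⟨(i : ℕ), hk⟩ : Fin n) : ℕ) < d from i.2)]
    rw [Finset.sum_congr rfl fun j _ => by rw [he j]] at h
    rw [Finset.sum_congr rfl fun j _ => mul_comm (u j) (ω i j)]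
    exact h
  -- u lies in the stoichiometric subspace
  have huΓ : u ∈ stoichSpan y y' := by
    rw [← orthComp_orthComp (stoichSpan y y')]
    intro x hx
    exact dot_orth u (orthComp (stoichSpan y y')) ω hω.2.1 horth x hx
  -- the vector z = Z(w) u satisfies A z = 0
  set z : Fin m → ℝ := fun r => ∑ j, w r j * u j with hz
  have hx0 : ∀ k : Fin n, ∑ r, (y' r k - y r k) * z r = 0 := by
    have hbot : ∀ k : Fin n, ¬ ((k : ℕ) < d) → ∑ r, (y' r k - y r k) * z r = 0 := by
      intro k hk
      have h := hrow k
      have he : ∀ j, Mt y y' d ω w k j * u j = ∑ r, (y' r k - y r k) * w r j * u j := by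
        intro j
        rw [Mt_apply, dif_neg hk, Finset.sum_mul]
      rw [Finset.sum_congr rfl fun j _ => he j, Finset.sum_comm] at h
      rw [← h]
      refine Finset.sum_congr rfl fun r _ => ?_
      rw [hz, Finset.mul_sum]
      exact Finset.sum_congr rfl fun j _ => by ring
    have hmem : (fun k => ∑ r, (y' r k - y r k) * z r) ∈ stoichSpan y y' := by
      have heq : (fun k => ∑ r, (y' r k - y r k) * z r) = Matrix.mulVec (stoich y y') z := by
        funext k
        rw [Matrix.mulVec, dotProduct]
        exact Finset.sum_congr rfl fun r _ => by simp [stoich]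
      rw [heq]
      exact mulVec_mem_stoichSpan y y' z
    have := eq_zero_of_mem_stoichSpan_of_bot_zero d y y' ω hω _ hmem hbot
    intro k
    exact congrFun this k
  -- construct the two positive states
  set bb : Fin n → ℝ := fun j => if u j = 0 then 1 else u j / (Real.exp (u j) - 1) with hbb
  set aa : Fin n → ℝ := fun j => bb j * Real.exp (u j) with haa
  have hexpne : ∀ j : Fin n, u j ≠ 0 → Real.exp (u j) - 1 ≠ 0 := by
    intro j hj
    exact sub_ne_zero.mpr (fun hc => hj
      (Real.exp_injective (by rw [hc, Real.exp_zero] : Real.exp (u j) = Real.exp 0)))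
  have hbbpos : Pos bb := by
    intro j
    simp only [hbb]
    by_cases hj : u j = 0
    · simp [hj]
    · rw [if_neg hj]
      rcases lt_or_gt_of_ne hj with h | h
      · have : Real.exp (u j) - 1 < 0 := by
          have := Real.exp_lt_one_iff.mpr h
          linarith
        exact div_pos_of_neg_of_neg h this
      · have : 0 < Real.exp (u j) - 1 := by
          have := Real.one_lt_exp_iff.mpr h
          linarith
        exact div_pos h this
  have haapos : Pos aa := fun j => mul_pos (hbbpos j) (Real.exp_pos _)
  have hab : ∀ j, aa j - bb j = u j := by
    intro j
    simp only [haa, hbb]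
    by_cases hj : u j = 0
    · simp [hj]
    · rw [if_neg hj]
      rw [show u j / (Real.exp (u j) - 1) * Real.exp (u j) - u j / (Real.exp (u j) - 1)
          = u j / (Real.exp (u j) - 1) * (Real.exp (u j) - 1) from by ring]
      exact div_mul_cancel₀ _ (hexpne j hj)
  have habne : aa ≠ bb := by
    obtain ⟨j, hj⟩ := Function.ne_iff.mp hu0
    intro hc
    apply hj
    have := hab j
    rw [hc] at this
    simpa using this.symm
  have habmem : aa - bb ∈ stoichSpan y y' := by
    have : aa - bb = u := by funext j; rw [Pi.sub_apply, hab]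
    rwa [this]
  -- the rate vector
  set Lb : Fin m → ℝ := fun r => ∑ j, w r j * Real.log (bb j) with hLb
  have hlogaa : ∀ j, Real.log (aa j) = Real.log (bb j) + u j := by
    intro j
    rw [haa]
    rw [Real.log_mul (ne_of_gt (hbbpos j)) (ne_of_gt (Real.exp_pos _)), Real.log_exp]
  have hPa : ∀ r, ∏ j, aa j ^ w r j = Real.exp (Lb r + z r) := by
    intro r
    rw [prod_rpow_eq_exp haapos]
    congr 1
    rw [hLb, hz, ← Finset.sum_add_distrib]
    exact Finset.sum_congr rfl fun j _ => by rw [hlogaa j]; ring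
  have hPb : ∀ r, ∏ j, bb j ^ w r j = Real.exp (Lb r) := by
    intro r
    rw [prod_rpow_eq_exp hbbpos]
  have hsgn : ∀ r, Real.sign (∏ j, aa j ^ w r j - ∏ j, bb j ^ w r j) = Real.sign (z r) := by
    intro r
    rw [hPa r, hPb r, sign_exp_sub_exp]
    congr 1
    ring
  set κ : Fin m → ℝ := fun r =>
    if (∏ j, aa j ^ w r j - ∏ j, bb j ^ w r j) = 0 then 1
    else z r / (∏ j, aa j ^ w r j - ∏ j, bb j ^ w r j) with hκ
  have hκpos : ∀ r, 0 < κ r := by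
    intro r
    simp only [hκ]
    by_cases hc : (∏ j, aa j ^ w r j - ∏ j, bb j ^ w r j) = 0
    · simp [hc]
    · rw [if_neg hc]
      rcases lt_or_gt_of_ne hc with h | h
      · have := hsgn r
        rw [Real.sign_of_neg h] at this
        exact div_pos_of_neg_of_neg (sign_eq_neg_one_iff'.mp this.symm) h
      · have := hsgn r
        rw [Real.sign_of_pos h] at this
        exact div_pos (sign_eq_one_iff'.mp this.symm) h
  have hκz : ∀ r, κ r * (∏ j, aa j ^ w r j - ∏ j, bb j ^ w r j) = z r := by
    intro r
    simp only [hκ]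
    by_cases hc : (∏ j, aa j ^ w r j - ∏ j, bb j ^ w r j) = 0
    · rw [if_pos hc, hc, mul_zero]
      have := hsgn r
      rw [hc, Real.sign_zero] at this
      exact (Real.sign_eq_zero_iff.mp this.symm).symm
    · rw [if_neg hc]
      exact div_mul_cancel₀ _ hc
  -- conclude
  intro hinj
  apply hinj κ hκpos aa bb haapos hbbpos habne habmem
  funext i
  rw [← sub_eq_zero]
  have : plf y y' κ w aa i - plf y y' κ w bb i = ∑ r, (y' r i - y r i) * z r := by
    rw [plf, plf, ← Finset.sum_sub_distrib]
    refine Finset.sum_congr rfl fun r _ => ?_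
    rw [← hκz r]
    ring
  rw [this, hx0 i]

/-! ### nonvanishing determinants imply injectivity -/

lemma inj_of_det_ne_zero (y y' : Fin m → Fin n → ℝ) {d : ℕ}
    (ω : Fin d → Fin n → ℝ) (hω : IsReducedBasis d (stoichSpan y y') ω)
    (v : Fin m → Fin n → ℝ)
    (hdet : ∀ w, (∀ r i, Real.sign (w r i) = Real.sign (v r i)) →
      (Mt y y' d ω w).det ≠ 0) :
    InjOverPL y y' v := by
  classical
  intro κ hκ a b ha hb habne habmem hplf
  set u : Fin n → ℝ := fun j => Real.log (a j) - Real.log (b j) with hu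
  set E : Fin n → ℝ := fun j => if u j = 0 then 1 else (a j - b j) / u j with hE
  have hsub : ∀ j, Real.sign (a j - b j) = Real.sign (u j) := by
    intro j
    rw [show a j - b j = Real.exp (Real.log (a j)) - Real.exp (Real.log (b j)) from by
      rw [Real.exp_log (ha j), Real.exp_log (hb j)]]
    exact sign_exp_sub_exp _ _
  have hEpos : ∀ j, 0 < E j := by
    intro j
    simp only [hE]
    by_cases hj : u j = 0
    · simp [hj]
    · rw [if_neg hj]
      rcases lt_or_gt_of_ne hj with h | h
      · have := hsub j
        rw [Real.sign_of_neg h] at this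
        exact div_pos_of_neg_of_neg (sign_eq_neg_one_iff'.mp this) h
      · have := hsub j
        rw [Real.sign_of_pos h] at this
        exact div_pos (sign_eq_one_iff'.mp this) h
  have hEu : ∀ j, E j * u j = a j - b j := by
    intro j
    simp only [hE]
    by_cases hj : u j = 0
    · rw [if_pos hj, hj, mul_zero]
      have := hsub j
      rw [hj, Real.sign_zero] at this
      exact (Real.sign_eq_zero_iff.mp this).symm
    · rw [if_neg hj]
      exact div_mul_cancel₀ _ hj
  set La : Fin m → ℝ := fun r => ∑ j, v r j * Real.log (a j) with hLa
  set Lb : Fin m → ℝ := fun r => ∑ j, v r j * Real.log (b j) with hLb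
  set D : Fin m → ℝ := fun r => κ r *
    (if La r = Lb r then Real.exp (La r)
     else (Real.exp (La r) - Real.exp (Lb r)) / (La r - Lb r)) with hD
  have hDpos : ∀ r, 0 < D r := by
    intro r
    simp only [hD]
    refine mul_pos (hκ r) ?_
    by_cases hr : La r = Lb r
    · rw [if_pos hr]; exact Real.exp_pos _
    · rw [if_neg hr]
      have hs := sign_exp_sub_exp (La r) (Lb r)
      rcases lt_or_gt_of_ne (sub_ne_zero.mpr hr) with h | h
      · rw [Real.sign_of_neg h] at hs
        exact div_pos_of_neg_of_neg (sign_eq_neg_one_iff'.mp hs) h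
      · rw [Real.sign_of_pos h] at hs
        exact div_pos (sign_eq_one_iff'.mp hs) h
  have hDL : ∀ r, κ r * (Real.exp (La r) - Real.exp (Lb r)) = D r * (La r - Lb r) := by
    intro r
    simp only [hD]
    by_cases hr : La r = Lb r
    · rw [hr]; ring
    · rw [if_neg hr]
      rw [mul_assoc, div_mul_cancel₀ _ (sub_ne_zero.mpr hr)]
  set w : Fin m → Fin n → ℝ := fun r j => (D r / E j) * v r j with hw
  have hsgn : ∀ r i, Real.sign (w r i) = Real.sign (v r i) := by
    intro r i
    simp only [hw]
    exact sign_mul_pos' (div_pos (hDpos r) (hEpos i)) _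
  set u' : Fin n → ℝ := fun j => a j - b j with hu'
  have hu'0 : u' ≠ 0 := by
    obtain ⟨j, hj⟩ := Function.ne_iff.mp habne
    intro hc
    exact hj (sub_eq_zero.mp (congrFun hc j))
  have hmv : Matrix.mulVec (Mt y y' d ω w) u' = 0 := by
    funext k
    rw [Matrix.mulVec, dotProduct, Pi.zero_apply]
    by_cases hk : (k : ℕ) < d
    · have he : ∀ j, Mt y y' d ω w k j = ω ⟨(k : ℕ), hk⟩ j := by
        intro j; rw [Mt_apply, dif_pos hk]
      rw [Finset.sum_congr rfl fun j _ => by rw [he j]]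
      have := hω.1 ⟨(k : ℕ), hk⟩ (a - b) habmem
      simpa using this
    · have he : ∀ j, Mt y y' d ω w k j * u' j = ∑ r, (y' r k - y r k) * w r j * u' j := by
        intro j
        rw [Mt_apply, dif_neg hk, Finset.sum_mul]
      rw [Finset.sum_congr rfl fun j _ => he j, Finset.sum_comm]
      have hkey : ∀ r, ∑ j, (y' r k - y r k) * w r j * u' j
          = (y' r k - y r k) * (κ r * ((∏ j, a j ^ v r j) - ∏ j, b j ^ v r j)) := by
        intro r
        have h1 : ∀ j, (y' r k - y r k) * w r j * u' j
            = (y' r k - y r k) * (D r * (v r j * u j)) := by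
          intro j
          have hEne : E j ≠ 0 := ne_of_gt (hEpos j)
          have hwv : w r j * u' j = D r * (v r j * u j) := by
            have e1 : w r j = D r / E j * v r j := rfl
            have e2 : u' j = E j * u j := by rw [hEu j]
            rw [e1, e2, div_mul_eq_mul_div, div_mul_eq_mul_div, div_eq_iff hEne]
            ring
          rw [mul_assoc, hwv]
        rw [Finset.sum_congr rfl fun j _ => h1 j, ← Finset.mul_sum, ← Finset.mul_sum]
        congr 1
        have h2 : ∑ j, v r j * u j = La r - Lb r := by
          rw [hLa, hLb, ← Finset.sum_sub_distrib]
          refine Finset.sum_congr rfl fun j _ => ?_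
          rw [hu]; ring
        rw [h2, ← hDL r, prod_rpow_eq_exp ha, prod_rpow_eq_exp hb]
      rw [Finset.sum_congr rfl fun r _ => hkey r]
      have : ∀ r, (y' r k - y r k) * (κ r * ((∏ j, a j ^ v r j) - ∏ j, b j ^ v r j))
          = κ r * (∏ j, a j ^ v r j) * (y' r k - y r k)
            - κ r * (∏ j, b j ^ v r j) * (y' r k - y r k) := fun r => by ring
      rw [Finset.sum_congr rfl fun r _ => this r, Finset.sum_sub_distrib]
      have hpk := congrFun hplf k
      rw [plf, plf] at hpk
      rw [hpk, sub_self]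
  exact hdet w hsgn (Matrix.exists_mulVec_eq_zero_iff.mp ⟨u', hu'0, hmv⟩)

/-! ### sign combinatorics -/

lemma sign_vals (x : ℝ) : Real.sign x = -1 ∨ Real.sign x = 0 ∨ Real.sign x = 1 := by
  rcases lt_trichotomy x 0 with h | rfl | h
  · exact Or.inl (Real.sign_of_neg h)
  · exact Or.inr (Or.inl Real.sign_zero)
  · exact Or.inr (Or.inr (Real.sign_of_pos h))

lemma sign_of_influence {I : Fin m → Fin n → ℝ} (hI : IsInfluence I) :
    ∀ r i, Real.sign (I r i) = I r i := by
  intro r i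
  rcases hI r i with h | h | h <;> rw [h]
  · exact Real.sign_of_neg (by norm_num)
  · exact Real.sign_zero
  · exact Real.sign_of_pos (by norm_num)

lemma det_affine_pair (y y' : Fin m → Fin n → ℝ) (d : ℕ) (ω : Fin d → Fin n → ℝ) :
    AffEach (fun t : (Fin m × Fin n) → ℝ => (Mt y y' d ω (fun r i => t (r, i))).det) := by
  intro t j
  obtain ⟨a, b, hab⟩ := det_affine y y' d ω (fun r i => t (r, i)) j.1 j.2
  refine ⟨a, b, fun x => ?_⟩
  have key : (fun r i => Function.update t j x (r, i))
      = (fun r i => if r = j.1 ∧ i = j.2 then x else t (r, i)) := by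
    funext r i
    rw [Function.update_apply]
    by_cases h : (r, i) = j
    · rw [if_pos h, if_pos ⟨congrArg Prod.fst h, congrArg Prod.snd h⟩]
    · rw [if_neg h, if_neg (fun hc => h (Prod.ext hc.1 hc.2))]
  show (Mt y y' d ω (fun r i => Function.update t j x (r, i))).det = a + b * x
  rw [key, hab x]

lemma det_affine_scaled (y y' : Fin m → Fin n → ℝ) (d : ℕ) (ω : Fin d → Fin n → ℝ)
    (I : Fin m → Fin n → ℝ) :
    AffEach (fun t : (Fin m × Fin n) → ℝ =>
      (Mt y y' d ω (fun r i => I r i * t (r, i))).det) := by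
  intro t j
  obtain ⟨a, b, hab⟩ := det_affine y y' d ω (fun r i => I r i * t (r, i)) j.1 j.2
  refine ⟨a, b * I j.1 j.2, fun x => ?_⟩
  have key : (fun r i => I r i * Function.update t j x (r, i))
      = (fun r i => if r = j.1 ∧ i = j.2 then I j.1 j.2 * x else I r i * t (r, i)) := by
    funext r i
    rw [Function.update_apply]
    by_cases h : (r, i) = j
    · rw [if_pos h, if_pos ⟨congrArg Prod.fst h, congrArg Prod.snd h⟩]
      rw [← h]
    · rw [if_neg h, if_neg (fun hc => h (Prod.ext hc.1 hc.2))]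
  show (Mt y y' d ω (fun r i => I r i * Function.update t j x (r, i))).det = _
  rw [key, hab (I j.1 j.2 * x)]
  ring

lemma signedDet_of_ne (y y' : Fin m → Fin n → ℝ) (d : ℕ) (ω : Fin d → Fin n → ℝ)
    (I : Fin m → Fin n → ℝ) (hI : IsInfluence I)
    (hnz : ∀ v, InSigma I v → (Mt y y' d ω v).det ≠ 0) : SignedDet y y' d ω I := by
  intro v w hv hw
  apply sign_eq_of_mul_pos
  have key := aff_sign_const (det_affine_pair y y' d ω)
    (fun j => v j.1 j.2) (fun j => w j.1 j.2) ?_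
  · exact key
  · intro p hp
    apply hnz (fun r i => p (r, i))
    intro r i
    show Real.sign (p (r, i)) = I r i
    have hpm : p (r, i) ∈ Set.uIcc (v r i) (w r i) := hp (r, i)
    rw [Set.mem_uIcc] at hpm
    rcases hI r i with h | h | h
    · have hv' : v r i < 0 := sign_eq_neg_one_iff'.mp (by rw [hv r i, h])
      have hw' : w r i < 0 := sign_eq_neg_one_iff'.mp (by rw [hw r i, h])
      rw [h]
      apply Real.sign_of_neg
      rcases hpm with ⟨h1, h2⟩ | ⟨h1, h2⟩ <;> linarith
    · have hv' : v r i = 0 := Real.sign_eq_zero_iff.mp (by rw [hv r i, h])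
      have hw' : w r i = 0 := Real.sign_eq_zero_iff.mp (by rw [hw r i, h])
      rw [h]
      have : p (r, i) = 0 := by
        rcases hpm with ⟨h1, h2⟩ | ⟨h1, h2⟩ <;> linarith [hv', hw']
      rw [this, Real.sign_zero]
    · have hv' : 0 < v r i := sign_eq_one_iff'.mp (by rw [hv r i, h])
      have hw' : 0 < w r i := sign_eq_one_iff'.mp (by rw [hw r i, h])
      rw [h]
      apply Real.sign_of_pos
      rcases hpm with ⟨h1, h2⟩ | ⟨h1, h2⟩ <;> linarith

lemma aff_ne_orthant {ι : Type*} [Fintype ι] [DecidableEq ι]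
    {H : (ι → ℝ) → ℝ} (hA : AffEach H)
    (hpos : ∀ t, (∀ j, 0 < t j) → 0 < H t)
    (s p : ι → ℝ) (hs : ∀ j, 0 ≤ s j) (hp : ∀ j, 0 ≤ p j)
    (hsupp : ∀ j, p j = 0 → s j = 0) (hsne : H s ≠ 0) : H p ≠ 0 := by
  intro h0
  exact hsne (aff_zero_prop hA
    (aff_nonneg hA (fun t ht => le_of_lt (hpos t ht))) s hs p hp h0 hsupp)

lemma det_ne_zero_interval (y y' : Fin m → Fin n → ℝ) (d : ℕ) (ω : Fin d → Fin n → ℝ)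
    (I₁ I₂ : Fin m → Fin n → ℝ) (hI₁ : IsInfluence I₁) (hI₂ : IsInfluence I₂)
    (hord : Preceq I₁ I₂) (hsd : SignedDet y y' d ω I₂)
    (v₁ : Fin m → Fin n → ℝ) (h₁ : InSigma I₁ v₁) (hd1 : (Mt y y' d ω v₁).det ≠ 0) :
    ∀ w, Preceq I₁ (infOf w) → Preceq (infOf w) I₂ → (Mt y y' d ω w).det ≠ 0 := by
  intro w hw1 hw2
  classical
  set H : ((Fin m × Fin n) → ℝ) → ℝ :=
    fun t => (Mt y y' d ω (fun r i => I₂ r i * t (r, i))).det with hH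
  have hA : AffEach H := det_affine_scaled y y' d ω I₂
  set t₁ : (Fin m × Fin n) → ℝ := fun j => I₂ j.1 j.2 * v₁ j.1 j.2 with ht₁
  set tw : (Fin m × Fin n) → ℝ := fun j => I₂ j.1 j.2 * w j.1 j.2 with htw
  -- pointwise sign facts
  have hIzero : ∀ r i, I₂ r i = 0 → I₁ r i = 0 := by
    intro r i h
    rcases hI₁ r i with h' | h' | h'
    · rw [(hord r i).2 h'] at h; norm_num at h
    · exact h'
    · rw [(hord r i).1 h'] at h; norm_num at h
  have hv₁zero : ∀ r i, I₁ r i = 0 → v₁ r i = 0 := by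
    intro r i h
    exact Real.sign_eq_zero_iff.mp (by rw [h₁ r i, h])
  have hwzero : ∀ r i, I₂ r i = 0 → w r i = 0 := by
    intro r i h
    rcases sign_vals (w r i) with h' | h' | h'
    · rw [(hw2 r i).2 h'] at h; norm_num at h
    · exact Real.sign_eq_zero_iff.mp h'
    · rw [(hw2 r i).1 h'] at h; norm_num at h
  have ht₁eq : (fun r i => I₂ r i * t₁ (r, i)) = v₁ := by
    funext r i
    rcases hI₂ r i with h | h | h <;> simp only [ht₁, h]
    · ring
    · rw [zero_mul, hv₁zero r i (hIzero r i h)]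
    · ring
  have htweq : (fun r i => I₂ r i * tw (r, i)) = w := by
    funext r i
    rcases hI₂ r i with h | h | h <;> simp only [htw, h]
    · ring
    · rw [zero_mul, hwzero r i h]
    · ring
  have ht₁nn : ∀ j, 0 ≤ t₁ j := by
    intro j
    rcases hI₂ j.1 j.2 with h | h | h <;> simp only [ht₁, h]
    · -- I₂ = -1 : v₁ ≤ 0
      have : ¬ (0 < v₁ j.1 j.2) := by
        intro hc
        have := h₁ j.1 j.2
        rw [Real.sign_of_pos hc] at this
        rw [(hord j.1 j.2).1 this.symm] at h
        norm_num at h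
      nlinarith [not_lt.mp this]
    · simp
    · have : ¬ (v₁ j.1 j.2 < 0) := by
        intro hc
        have := h₁ j.1 j.2
        rw [Real.sign_of_neg hc] at this
        rw [(hord j.1 j.2).2 this.symm] at h
        norm_num at h
      nlinarith [not_lt.mp this]
  have htwnn : ∀ j, 0 ≤ tw j := by
    intro j
    rcases hI₂ j.1 j.2 with h | h | h <;> simp only [htw, h]
    · have : ¬ (0 < w j.1 j.2) := by
        intro hc
        rw [(hw2 j.1 j.2).1 (Real.sign_of_pos hc)] at h
        norm_num at h
      nlinarith [not_lt.mp this]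
    · simp
    · have : ¬ (w j.1 j.2 < 0) := by
        intro hc
        rw [(hw2 j.1 j.2).2 (Real.sign_of_neg hc)] at h
        norm_num at h
      nlinarith [not_lt.mp this]
  have hsupp : ∀ j, tw j = 0 → t₁ j = 0 := by
    intro j h
    rcases hI₂ j.1 j.2 with h2 | h2 | h2
    · -- I₂ = -1, so w j = 0 from tw j = 0
      have hw0 : w j.1 j.2 = 0 := by
        have : (-1 : ℝ) * w j.1 j.2 = 0 := by rw [← h2]; exact h
        linarith
      have hI₁0 : I₁ j.1 j.2 = 0 := by
        rcases hI₁ j.1 j.2 with h' | h' | h'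
        · have hcon : Real.sign (w j.1 j.2) = -1 := (hw1 j.1 j.2).2 h'
          rw [hw0, Real.sign_zero] at hcon
          norm_num at hcon
        · exact h'
        · have hcon : Real.sign (w j.1 j.2) = 1 := (hw1 j.1 j.2).1 h'
          rw [hw0, Real.sign_zero] at hcon
          norm_num at hcon
      simp only [ht₁]
      rw [hv₁zero j.1 j.2 hI₁0, mul_zero]
    · simp only [ht₁, h2, zero_mul]
    · have hw0 : w j.1 j.2 = 0 := by
        have : (1 : ℝ) * w j.1 j.2 = 0 := by rw [← h2]; exact h
        linarith
      have hI₁0 : I₁ j.1 j.2 = 0 := by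
        rcases hI₁ j.1 j.2 with h' | h' | h'
        · have hcon : Real.sign (w j.1 j.2) = -1 := (hw1 j.1 j.2).2 h'
          rw [hw0, Real.sign_zero] at hcon
          norm_num at hcon
        · exact h'
        · have hcon : Real.sign (w j.1 j.2) = 1 := (hw1 j.1 j.2).1 h'
          rw [hw0, Real.sign_zero] at hcon
          norm_num at hcon
      simp only [ht₁]
      rw [hv₁zero j.1 j.2 hI₁0, mul_zero]
  have hposmem : ∀ t : (Fin m × Fin n) → ℝ, (∀ j, 0 < t j) →
      InSigma I₂ (fun r i => I₂ r i * t (r, i)) := by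
    intro t ht r i
    show Real.sign (I₂ r i * t (r, i)) = I₂ r i
    rcases hI₂ r i with h | h | h <;> rw [h]
    · exact Real.sign_of_neg (by nlinarith [ht (r, i)])
    · rw [zero_mul, Real.sign_zero]
    · exact Real.sign_of_pos (by nlinarith [ht (r, i)])

  -- H is nonzero at t₁
  have hHt₁ : H t₁ ≠ 0 := by
    show (Mt y y' d ω (fun r i => I₂ r i * t₁ (r, i))).det ≠ 0
    rw [ht₁eq]; exact hd1
  -- find a positive point with nonzero determinant
  have hex : ∃ tp : (Fin m × Fin n) → ℝ, (∀ j, 0 < tp j) ∧ H tp ≠ 0 := by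
    by_contra hc
    push_neg at hc
    exact hHt₁ (aff_vanish hA hc t₁)
  obtain ⟨tp, htp, htpne⟩ := hex
  have hsgnc : ∀ t, (∀ j, 0 < t j) → Real.sign (H t) = Real.sign (H tp) :=
    fun t ht => hsd _ _ (hposmem t ht) (hposmem tp htp)
  have hgoal : H tw ≠ 0 := by
    rcases lt_trichotomy (H tp) 0 with hneg | h0 | hpos
    · have hAneg : AffEach (fun t => -(H t)) := by
        intro t j
        obtain ⟨a, b, hab⟩ := hA t j
        refine ⟨-a, -b, fun x => ?_⟩
        show -(H (Function.update t j x)) = -a + -b * x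
        rw [hab x]; ring
      have hposH : ∀ t, (∀ j, 0 < t j) → 0 < -(H t) := by
        intro t ht
        have := hsgnc t ht
        rw [Real.sign_of_neg hneg] at this
        have := sign_eq_neg_one_iff'.mp this
        linarith
      have := aff_ne_orthant hAneg hposH t₁ tw ht₁nn htwnn hsupp
        (by simpa using hHt₁)
      intro hc; rw [hc] at this; simp at this
    · exact absurd h0 htpne
    · have hposH : ∀ t, (∀ j, 0 < t j) → 0 < H t := by
        intro t ht
        have := hsgnc t ht
        rw [Real.sign_of_pos hpos] at this
        exact sign_eq_one_iff'.mp this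
      exact aff_ne_orthant hA hposH t₁ tw ht₁nn htwnn hsupp hHt₁
  have : H tw = (Mt y y' d ω w).det := by
    show (Mt y y' d ω (fun r i => I₂ r i * tw (r, i))).det = _
    rw [htweq]
  rwa [this] at hgoal

/-- Proposition `openpos`. -/
theorem stmt9 {n m s : ℕ} (d : ℕ) (hd : d = n - s)
    (y y' : Fin m → Fin n → ℝ)
    (hs : Module.finrank ℝ (stoichSpan y y') = s)
    (ω : Fin d → Fin n → ℝ)
    (hω : IsReducedBasis d (stoichSpan y y') ω)
    (I₁ I₂ : Fin m → Fin n → ℝ)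
    (hI₁ : IsInfluence I₁) (hI₂ : IsInfluence I₂)
    (hord : Preceq I₁ I₂) :
    ((∀ v, Preceq I₁ (infOf v) → Preceq (infOf v) I₂ → InjOverPL y y' v) ↔
      (SignedDet y y' d ω I₂ ∧ ∃ v₁, InSigma I₁ v₁ ∧ InjOverPL y y' v₁)) ∧
    ((∀ v, Preceq I₁ (infOf v) → Preceq (infOf v) I₂ → InjOverPL y y' v) ↔
      ((∀ v, InSigma I₁ v → InjOverPL y y' v) ∧ (∀ v, InSigma I₂ v → InjOverPL y y' v))) := by
  classical
  have hdn : d ≤ n := by omega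
  have hIsig₁ : InSigma I₁ I₁ := fun r i => sign_of_influence hI₁ r i
  have hDetNZ_of_L :
      (∀ v, Preceq I₁ (infOf v) → Preceq (infOf v) I₂ → InjOverPL y y' v) →
      ∀ w, Preceq I₁ (infOf w) → Preceq (infOf w) I₂ → (Mt y y' d ω w).det ≠ 0 := by
    intro hL w h1 h2 h0
    exact not_inj_of_det_eq_zero y y' hdn ω hω w h0 (hL w h1 h2)
  have hL_of_DetNZ :
      (∀ w, Preceq I₁ (infOf w) → Preceq (infOf w) I₂ → (Mt y y' d ω w).det ≠ 0) →
      ∀ v, Preceq I₁ (infOf v) → Preceq (infOf v) I₂ → InjOverPL y y' v := by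
    intro hD v h1 h2
    apply inj_of_det_ne_zero y y' ω hω v
    intro w' hw'
    have heq : infOf w' = infOf v := by
      funext r i
      exact hw' r i
    apply hD w'
    · rw [heq]; exact h1
    · rw [heq]; exact h2
  have hmemI₂ : ∀ v, InSigma I₂ v → Preceq I₁ (infOf v) ∧ Preceq (infOf v) I₂ := by
    intro v hv
    have heq : infOf v = I₂ := by funext r i; exact hv r i
    exact ⟨by rw [heq]; exact hord, by rw [heq]; exact fun r i => ⟨id, id⟩⟩
  have hmemI₁ : ∀ v, InSigma I₁ v → Preceq I₁ (infOf v) ∧ Preceq (infOf v) I₂ := by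
    intro v hv
    have heq : infOf v = I₁ := by funext r i; exact hv r i
    exact ⟨by rw [heq]; exact fun r i => ⟨id, id⟩, by rw [heq]; exact hord⟩
  have main1 : (∀ v, Preceq I₁ (infOf v) → Preceq (infOf v) I₂ → InjOverPL y y' v) ↔
      (SignedDet y y' d ω I₂ ∧ ∃ v₁, InSigma I₁ v₁ ∧ InjOverPL y y' v₁) := by
    constructor
    · intro hL
      have hD := hDetNZ_of_L hL
      exact ⟨signedDet_of_ne y y' d ω I₂ hI₂
          (fun v hv => hD v (hmemI₂ v hv).1 (hmemI₂ v hv).2),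
        I₁, hIsig₁, hL I₁ (hmemI₁ I₁ hIsig₁).1 (hmemI₁ I₁ hIsig₁).2⟩
    · rintro ⟨hsd, v₁, h₁, hinj₁⟩
      have hd1 : (Mt y y' d ω v₁).det ≠ 0 := fun h0 =>
        not_inj_of_det_eq_zero y y' hdn ω hω v₁ h0 hinj₁
      exact hL_of_DetNZ (det_ne_zero_interval y y' d ω I₁ I₂ hI₁ hI₂ hord hsd v₁ h₁ hd1)
  refine ⟨main1, ?_, ?_⟩
  · intro hL
    exact ⟨fun v hv => hL v (hmemI₁ v hv).1 (hmemI₁ v hv).2,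
      fun v hv => hL v (hmemI₂ v hv).1 (hmemI₂ v hv).2⟩
  · rintro ⟨hS1, hS2⟩
    apply main1.mpr
    exact ⟨signedDet_of_ne y y' d ω I₂ hI₂ (fun v hv h0 =>
        not_inj_of_det_eq_zero y y' hdn ω hω v h0 (hS2 v hv)),
      I₁, hIsig₁, hS1 I₁ hIsig₁⟩
end CRN
end
end
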